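/- arXiv:0909.1231 — 6 statements merged into one kernel-verified Lean document; each statement's English description precedes it below -/
import Mathlib

section
/- If a reduced word u over the alphabet {g_1^{±1},...,g_k^{±1}} appears cyclically in a cyclically reduced word w both as u and as u^{-1}, then these two appearances cannot overlap (not even at their endpoints). -/
/-- A letter `g_i^{±1}` of the alphabet `Σ_k`. -/
abbrev Letter (k : ℕ) := Fin k × Bool

/-- The inverse letter: `(g_i^{α})⁻¹ = g_i^{-α}`. -/
def Letter.inv {k : ℕ} (x : Letter k) : Letter k := (x.1, !x.2)

theorem modLt {α : Type*} {w : List α} (hw : w ≠ []) (x : ℕ) : x % w.length < w.length :=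
  Nat.mod_lt _ (List.length_pos_iff.mpr hw)

/-- `w` is cyclically reduced: no two cyclically consecutive letters are mutually inverse. -/
def CyclicallyReduced {k : ℕ} (w : List (Letter k)) : Prop :=
  ∀ i : Fin w.length,
    w.get ⟨((i : ℕ) + 1) % w.length, Nat.mod_lt _ i.pos⟩ ≠ Letter.inv (w.get i)

/-- `u` is a reduced word. -/
def Reduced {k : ℕ} (u : List (Letter k)) : Prop :=
  ∀ i, (h : i + 1 < u.length) →
    u.get ⟨i + 1, h⟩ ≠ Letter.inv (u.get ⟨i, Nat.lt_of_succ_lt h⟩)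

/-- `u` appears, as `u`, cyclically in `w` starting at position `p`. -/
def AppearsAt {k : ℕ} (u w : List (Letter k)) (p : ℕ) (hw : w ≠ []) : Prop :=
  ∀ l, (h : l < u.length) →
    u.get ⟨l, h⟩ = w.get ⟨(p + l) % w.length, modLt hw _⟩

/-- `u⁻¹` (the reversed word with inverted letters) appears cyclically in `w`
starting at position `q`. -/
def InvAppearsAt {k : ℕ} (u w : List (Letter k)) (q : ℕ) (hw : w ≠ []) : Prop :=
  ∀ l, (h : l < u.length) →
    Letter.inv (u.get ⟨u.length - 1 - l, by omega⟩)
      = w.get ⟨(q + l) % w.length, modLt hw _⟩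

/-!
Once the two appearances share a point, the letter of `w` at position `q + b` is the inverse
of the letter at position `p + (|u| - 1 - b)`, and the sum of these two positions is constant
modulo `|w|`. Taking `b` at the centre of the overlap (or at the common endpoint) makes the two
positions equal or cyclically adjacent: either a letter equals its own inverse, or `w` contains
a cancelling pair of cyclically consecutive letters.
-/

namespace Letter

variable {k : ℕ}

@[simp]
lemma inv_inv (x : Letter k) : x.inv.inv = x := by
  simp [Letter.inv]

lemma inv_ne_self (x : Letter k) : x.inv ≠ x := fun h => by
  simpa [Letter.inv] using congrArg Prod.snd h

lemma eq_inv_comm {x y : Letter k} : x = y.inv ↔ y = x.inv :=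
  ⟨fun h => by rw [h, inv_inv], fun h => by rw [h, inv_inv]⟩

end Letter

def cyclicGet {α : Type*} (w : List α) (hw : w ≠ []) (i : ℕ) : α :=
  w.get ⟨i % w.length, modLt hw i⟩

lemma cyclicGet_congr {α : Type*} {w : List α} (hw : w ≠ []) {i j : ℕ}
    (h : i ≡ j [MOD w.length]) : cyclicGet w hw i = cyclicGet w hw j :=
  congrArg w.get (Fin.ext h)

namespace CyclicallyReduced

variable {k : ℕ} {w : List (Letter k)}

lemma cyclicGet_succ_ne_inv (hcyc : CyclicallyReduced w) (hw : w ≠ []) (i : ℕ) :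
    cyclicGet w hw (i + 1) ≠ (cyclicGet w hw i).inv := by
  rw [cyclicGet_congr hw ((Nat.mod_modEq i _).add_right 1).symm]
  exact hcyc ⟨i % w.length, modLt hw i⟩

/-- `i + x ≡ j + y` with `|x - y| ≤ 1` says that `i` and `j` are equal or cyclically adjacent. -/
lemma cyclicGet_ne_inv_of_modEq (hcyc : CyclicallyReduced w) (hw : w ≠ []) {i j x y : ℕ}
    (hxy : x ≤ y + 1) (hyx : y ≤ x + 1) (h : i + x ≡ j + y [MOD w.length]) :
    cyclicGet w hw i ≠ (cyclicGet w hw j).inv := by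
  rcases (by omega : x = y ∨ x = y + 1 ∨ y = x + 1) with rfl | rfl | rfl
  · rw [cyclicGet_congr hw (Nat.ModEq.add_right_cancel' x h)]
    exact (Letter.inv_ne_self _).symm
  · have hij : i + 1 ≡ j [MOD w.length] :=
      Nat.ModEq.add_right_cancel' y (by rwa [add_right_comm, add_assoc])
    rw [Ne, Letter.eq_inv_comm, ← cyclicGet_congr hw hij]
    exact hcyc.cyclicGet_succ_ne_inv hw i
  · have hij : i ≡ j + 1 [MOD w.length] :=
      Nat.ModEq.add_right_cancel' x (by rwa [add_right_comm j, add_assoc])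
    rw [cyclicGet_congr hw hij]
    exact hcyc.cyclicGet_succ_ne_inv hw j

end CyclicallyReduced

theorem stmt0_general {k : ℕ} (w u : List (Letter k)) (hw : w ≠ [])
    (hcyc : CyclicallyReduced w) (hu : u ≠ [])
    (p q : ℕ) (hp : AppearsAt u w p hw) (hq : InvAppearsAt u w q hw) :
    ¬ ∃ s t, s ≤ u.length ∧ t ≤ u.length ∧ (p + s) % w.length = (q + t) % w.length := by
  rintro ⟨s, t, hs, ht, hst⟩
  have hm : 0 < u.length := List.length_pos_iff.mpr hu
  set m := u.length
  obtain ⟨b, hb, hlo, hhi⟩ :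
      ∃ b, b < m ∧ t + (m - 1 - b) ≤ s + b + 1 ∧ s + b ≤ t + (m - 1 - b) + 1 :=
    ⟨min (m - 1) ((m + t - s) / 2), by omega, by omega, by omega⟩
  have hletters : cyclicGet w hw (q + b) = (cyclicGet w hw (p + (m - 1 - b))).inv := by
    rw [cyclicGet, cyclicGet, ← hp (m - 1 - b) (by omega)]
    exact (hq b hb).symm
  refine hcyc.cyclicGet_ne_inv_of_modEq hw hlo hhi ?_ hletters
  calc q + b + (t + (m - 1 - b)) = q + t + (m - 1) := by omega
    _ ≡ p + s + (m - 1) [MOD w.length] := Nat.ModEq.add_right _ hst.symm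
    _ = p + (m - 1 - b) + (s + b) := by omega

/-- If a reduced word `u` appears cyclically in a cyclically reduced word `w` both as `u`
(at position `p`) and as `u⁻¹` (at position `q`), then the two appearances cannot
overlap, not even at their endpoints: the cyclic intervals `[p, p+|u|]` and `[q, q+|u|]`
are disjoint. -/
theorem stmt0 {k : ℕ} (w u : List (Letter k)) (hw : w ≠ [])
    (hcyc : CyclicallyReduced w) (hured : Reduced u) (hu : u ≠ [])
    (p q : ℕ) (hp : AppearsAt u w p hw) (hq : InvAppearsAt u w q hw) :
    ¬ ∃ s t, s ≤ u.length ∧ t ≤ u.length ∧ (p + s) % w.length = (q + t) % w.length :=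
  stmt0_general w u hw hcyc hu p q hp hq
end

section
/- In the recursive factorization of a cyclically reduced non-power word w into subwords a_n, b_n, at every stage n the following letter conditions hold: the last letter of a_n is not the inverse of the first letter of b_n; the last letter of b_n is not the inverse of the first letter of a_n; the last letter of a_n is not the inverse of the first letter of a_n; and the last letters of a_n and b_n are distinct. -/
/-- The element of the free group `F_k` represented by a word over `Σ_k`. -/
def toFree {k : ℕ} (w : List (Letter k)) : FreeGroup (Fin k) :=
  (w.map fun x => if x.2 then FreeGroup.of x.1 else (FreeGroup.of x.1)⁻¹).prod

/-
Every pair `aₙ bₙ` is a factor of `w`, since each step keeps a suffix (`aₙ bₙ₊₁ = bₙ`) or a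
prefix (`bₙ bₙ₊₁ = aₙ`) of the previous pair; as `w` is cyclically reduced, nothing cancels at
the junction `aₙ | bₙ`. The other three conditions pass from one stage to the next because the
words of the new pair begin and end with letters of the old ones; at the start, `t(b₀)⁻¹ ≠ h(a₀)`
is the wrap-around condition `t(w)⁻¹ ≠ h(w)`.
-/

section Factorization

variable {k : ℕ}

def Letter.ReducedJoin (u v : List (Letter k)) : Prop :=
  ∀ x ∈ u.getLast?, ∀ y ∈ v.head?, Letter.inv x ≠ y

open Letter

variable {w u v : List (Letter k)}

theorem CyclicallyReduced.isChain (hw : CyclicallyReduced w) :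
    w.IsChain (fun x y => Letter.inv x ≠ y) := by
  refine List.isChain_iff_getElem.mpr fun i hi => Ne.symm ?_
  simpa [Nat.mod_eq_of_lt hi] using hw ⟨i, by omega⟩

theorem CyclicallyReduced.reducedJoin_self (hw : CyclicallyReduced w) : ReducedJoin w w := by
  intro x hx y hy
  obtain ⟨hne, rfl⟩ := List.mem_getLast?_eq_getLast hx
  have hwrap := hw ⟨w.length - 1, by grind⟩
  cases w with
  | nil => exact absurd rfl hne
  | cons z l =>
    obtain rfl : z = y := by simpa using hy
    simpa [List.getLast_eq_getElem] using hwrap.symm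

/-- `(u, v)` plays the role of `(aₙ, bₙ)`; the remaining condition `t(aₙ)⁻¹ ≠ h(bₙ)` follows
from `isInfix` (see `FactorizationInvariant.reducedJoin`). -/
structure FactorizationInvariant (w u v : List (Letter k)) : Prop where
  isInfix : u ++ v <:+: w
  reducedJoin_right_left : ReducedJoin v u
  reducedJoin_self : ReducedJoin u u
  getLast_ne : ∀ x ∈ u.getLast?, ∀ y ∈ v.getLast?, x ≠ y

namespace FactorizationInvariant

theorem reducedJoin (hw : w.IsChain (fun x y => Letter.inv x ≠ y))
    (h : FactorizationInvariant w u v) : ReducedJoin u v :=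
  (List.isChain_append.mp (hw.infix h.isInfix)).2.2

theorem of_eq_append (hcyc : CyclicallyReduced w) (hw : w = u ++ v) (hself : ReducedJoin u u)
    (hlast : ∀ x ∈ u.getLast?, ∀ y ∈ v.getLast?, x ≠ y) : FactorizationInvariant w u v where
  isInfix := hw ▸ List.infix_refl _
  reducedJoin_right_left x hx y hy := hcyc.reducedJoin_self x
    (hw ▸ List.mem_getLast?_append_of_mem_getLast? hx) y
    (hw ▸ List.mem_head?_append_of_mem_head? hy)
  reducedJoin_self := hself
  getLast_ne := hlast

theorem step_left {v' : List (Letter k)} (h : FactorizationInvariant w u (u ++ v')) :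
    FactorizationInvariant w u v' where
  isInfix := (List.suffix_append u _).isInfix.trans h.isInfix
  reducedJoin_right_left x hx :=
    h.reducedJoin_right_left x (List.mem_getLast?_append_of_mem_getLast? hx)
  reducedJoin_self := h.reducedJoin_self
  getLast_ne x hx y hy := h.getLast_ne x hx y (List.mem_getLast?_append_of_mem_getLast? hy)

theorem step_right {v' : List (Letter k)} (h : FactorizationInvariant w (v ++ v') v) :
    FactorizationInvariant w v v' where
  isInfix := (List.prefix_append _ v).isInfix.trans h.isInfix
  reducedJoin_right_left x hx y hy := h.reducedJoin_self x
    (List.mem_getLast?_append_of_mem_getLast? hx) y (List.mem_head?_append_of_mem_head? hy)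
  reducedJoin_self x hx y hy :=
    h.reducedJoin_right_left x hx y (List.mem_head?_append_of_mem_head? hy)
  getLast_ne x hx y hy := (h.getLast_ne y (List.mem_getLast?_append_of_mem_getLast? hy) x hx).symm

end FactorizationInvariant

end Factorization

theorem stmt5_general {k : ℕ} (w : List (Letter k)) (hcyc : CyclicallyReduced w)
    (N : ℕ) (a b : ℕ → List (Letter k)) (hw0 : w = a 0 ++ b 0)
    (hlast : ∀ x ∈ (a 0).getLast?, ∀ y ∈ (b 0).getLast?, x ≠ y)
    (hha : ∀ x ∈ (a 0).getLast?, ∀ y ∈ (a 0).head?, Letter.inv x ≠ y)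
    (hrec : ∀ n < N,
      (a n <+: b n ∧ a (n + 1) = a n ∧ b n = a n ++ b (n + 1)) ∨
      (b n <+: a n ∧ a (n + 1) = b n ∧ a n = b n ++ b (n + 1))) :
    ∀ n ≤ N,
      (∀ x ∈ (a n).getLast?, ∀ y ∈ (b n).head?, Letter.inv x ≠ y) ∧
      (∀ x ∈ (b n).getLast?, ∀ y ∈ (a n).head?, Letter.inv x ≠ y) ∧
      (∀ x ∈ (a n).getLast?, ∀ y ∈ (a n).head?, Letter.inv x ≠ y) ∧
      (∀ x ∈ (a n).getLast?, ∀ y ∈ (b n).getLast?, x ≠ y) := by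
  have hinv : ∀ n ≤ N, FactorizationInvariant w (a n) (b n) := by
    intro n
    induction n with
    | zero => exact fun _ => .of_eq_append hcyc hw0 hha hlast
    | succ n ih =>
      intro hn
      rcases hrec n (by omega) with ⟨-, ha, hb⟩ | ⟨-, ha, hb⟩
      · exact ha ▸ (hb ▸ ih (by omega)).step_left
      · exact ha ▸ (hb ▸ ih (by omega)).step_right
  intro n hn
  have h := hinv n hn
  exact ⟨h.reducedJoin hcyc.isChain, h.reducedJoin_right_left, h.reducedJoin_self, h.getLast_ne⟩

/-- In the recursive factorization of a cyclically reduced non-power word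
`w = a₀ b₀` (with `t(a₀) ≠ t(b₀)` and `t(a₀)⁻¹ ≠ h(a₀)` at the start), at every
stage `n`: `t(aₙ)⁻¹ ≠ h(bₙ)`, `t(bₙ)⁻¹ ≠ h(aₙ)`, `t(aₙ)⁻¹ ≠ h(aₙ)`, and
`t(aₙ) ≠ t(bₙ)`, where `h` and `t` denote the first and last letters of a word. -/
theorem stmt5 {k : ℕ} (w : List (Letter k)) (hcyc : CyclicallyReduced w)
    (hnp : ¬ ∃ (g : FreeGroup (Fin k)) (d : ℕ), 2 ≤ d ∧ toFree w = g ^ d)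
    (N : ℕ) (a b : ℕ → List (Letter k))
    (ha0 : a 0 ≠ []) (hb0 : b 0 ≠ []) (hw0 : w = a 0 ++ b 0)
    (hlast : ∀ x ∈ (a 0).getLast?, ∀ y ∈ (b 0).getLast?, x ≠ y)
    (hha : ∀ x ∈ (a 0).getLast?, ∀ y ∈ (a 0).head?, Letter.inv x ≠ y)
    (hrec : ∀ n < N,
      (a n <+: b n ∧ a (n + 1) = a n ∧ b n = a n ++ b (n + 1)) ∨
      (b n <+: a n ∧ a (n + 1) = b n ∧ a n = b n ++ b (n + 1))) :
    ∀ n ≤ N,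
      (∀ x ∈ (a n).getLast?, ∀ y ∈ (b n).head?, Letter.inv x ≠ y) ∧
      (∀ x ∈ (b n).getLast?, ∀ y ∈ (a n).head?, Letter.inv x ≠ y) ∧
      (∀ x ∈ (a n).getLast?, ∀ y ∈ (a n).head?, Letter.inv x ≠ y) ∧
      (∀ x ∈ (a n).getLast?, ∀ y ∈ (b n).getLast?, x ≠ y) :=
  stmt5_general w hcyc N a b hw0 hlast hha hrec
end

section
/- For every word w in the free group F_k and all sufficiently large n, the expected number of fixed points of the permutation w(σ_1,...,σ_k), where σ_1,...,σ_k are independent uniform elements of S_n, equals n times the sum over realizable quotient graphs Γ of the trail of w of the term [(n−1)(n−2)···(n−v_Γ+1)] / ∏_{j=1}^k [n(n−1)···(n−e_Γ^j+1)], where v_Γ is the number of vertices of Γ and e_Γ^j the number of j-labeled edges. -/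
/-- The word map: substitute `σ_i` for `g_i` in `w` and take the product. -/
def wordPerm {k n : ℕ} (w : List (Letter k)) (σ : Fin k → Equiv.Perm (Fin n)) :
    Equiv.Perm (Fin n) :=
  (w.map fun x => if x.2 then σ x.1 else (σ x.1)⁻¹).prod

/-- The number of fixed points of a permutation of `Fin n`. -/
def fixCount {n : ℕ} (π : Equiv.Perm (Fin n)) : ℕ :=
  (Finset.univ.filter fun x => π x = x).card

/-- A realizable quotient graph of the trail of `w`, encoded as an equivalence relation
(boolean matrix) on the vertices `s_0, …, s_m` of the trail: `s_0 ≡ s_m`, and two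
equally-labeled edges never share an origin or a terminus in the quotient. -/
def RealizableQuot {k : ℕ} (w : List (Letter k))
    (r : Fin (w.length + 1) → Fin (w.length + 1) → Bool) : Prop :=
  (∀ i, r i i = true) ∧ (∀ i j, r i j = true → r j i = true) ∧
  (∀ i j l, r i j = true → r j l = true → r i l = true) ∧
  (r 0 (Fin.last w.length) = true) ∧
  (∀ h h' : Fin w.length, (w.get h).1 = (w.get h').1 →
    (((w.get h).2 = (w.get h').2 →
        r h.castSucc h'.castSucc = r (h.succ) (h'.succ)) ∧
     ((w.get h).2 ≠ (w.get h').2 →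
        r h.castSucc (h'.succ) = r (h.succ) h'.castSucc)))

/-- The equivalence class (block) of a vertex. -/
def blockOf {k : ℕ} (w : List (Letter k))
    (r : Fin (w.length + 1) → Fin (w.length + 1) → Bool) (i : Fin (w.length + 1)) :
    Finset (Fin (w.length + 1)) :=
  Finset.univ.filter fun j => r i j = true

/-- `v_Γ` : the number of vertices (blocks) of the quotient graph. -/
def vcount {k : ℕ} (w : List (Letter k))
    (r : Fin (w.length + 1) → Fin (w.length + 1) → Bool) : ℕ :=
  (Finset.univ.image (blockOf w r)).card

/-- `e_Γ^j` : the number of `j`-labeled (directed) edges of the quotient graph. -/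
def ecount {k : ℕ} (w : List (Letter k))
    (r : Fin (w.length + 1) → Fin (w.length + 1) → Bool) (j : Fin k) : ℕ :=
  ((Finset.univ.filter fun h : Fin w.length => (w.get h).1 = j).image fun h =>
    if (w.get h).2 then (blockOf w r h.castSucc, blockOf w r h.succ)
    else (blockOf w r h.succ, blockOf w r h.castSucc)).card

/-!
Summing the fixed points of `w(σ)` over `σ` counts the pairs `(σ, f)` in which
`f : {s_0, …, s_m} → [n]` is a closed lift of the trail of `w`, i.e. `f(s_0) = f(s_m)` and every
`j`-labelled edge of the trail is mapped to an edge `x ↦ σ_j x`. Grouping these pairs by the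
kernel of `f`, which is a realizable quotient `Γ`, there are `n(n-1)⋯(n-v_Γ+1)` maps `f`
with kernel `Γ`, and for each of them the `j`-labelled edges of `Γ` prescribe `σ_j` on `e_Γ^j`
points, leaving `(n - e_Γ^j)!` choices. Dividing by `(n!)^k` gives the formula.
-/

open Finset

theorem Finset.card_image_eq_of_eq_iff {α β γ : Type*} [DecidableEq β] [DecidableEq γ]
    {s : Finset α} {F : α → β} {G : α → γ}
    (h : ∀ a ∈ s, ∀ b ∈ s, F a = F b ↔ G a = G b) : #(s.image F) = #(s.image G) := by
  set P := s.image fun a => (F a, G a)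
  have hP : ∀ p ∈ P, ∀ q ∈ P, (p.1 = q.1 ↔ p.2 = q.2) := by
    simp only [P, mem_image]
    rintro _ ⟨a, ha, rfl⟩ _ ⟨b, hb, rfl⟩
    exact h a ha b hb
  calc #(s.image F) = #(P.image Prod.fst) := by rw [image_image]; rfl
    _ = #P := card_image_of_injOn fun p hp q hq hpq => Prod.ext hpq ((hP p hp q hq).1 hpq)
    _ = #(P.image Prod.snd) :=
      (card_image_of_injOn fun p hp q hq hpq => Prod.ext ((hP p hp q hq).2 hpq) hpq).symm
    _ = #(s.image G) := by rw [image_image]; rfl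

namespace Equiv.Perm

variable {α : Type*} [Fintype α] [DecidableEq α]

theorem card_subtype_forall_mem_apply_eq_self (A : Finset α) :
    Nat.card {π : Perm α // ∀ x ∈ A, π x = x} = (Fintype.card α - #A).factorial := by
  rw [Nat.card_eq_fintype_card, ← Fintype.card_congr
      ((Perm.subtypeEquivSubtypePerm (· ∉ A)).trans
        (Equiv.subtypeEquivRight fun π => by simp only [not_not])),
    Fintype.card_perm, Fintype.card_subtype_compl, Fintype.card_coe]

theorem card_subtype_forall_mem_apply_eq_of_injOn {A : Finset α} {g : α → α}
    (hg : Set.InjOn g A) :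
    Nat.card {π : Perm α // ∀ x ∈ A, π x = g x} = (Fintype.card α - #A).factorial := by
  obtain ⟨π₀, hπ₀⟩ := Set.MapsTo.exists_equiv_extend_of_card_eq (t := univ)
    card_univ.symm (fun x _ => mem_coe.2 (mem_univ (g x))) hg
  let τ : Perm α := π₀.trans (Equiv.subtypeUnivEquiv mem_univ)
  have hτ : ∀ x ∈ A, τ x = g x := hπ₀
  rw [← card_subtype_forall_mem_apply_eq_self A]
  refine Nat.card_congr ((Equiv.mulLeft τ⁻¹).subtypeEquiv fun π => ?_)
  refine forall₂_congr fun x hx => ?_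
  rw [coe_mulLeft, Perm.mul_apply, Perm.inv_eq_iff_eq, hτ x hx]

theorem card_subtype_forall_apply_eq {ι : Type*} (s : Finset ι) (a b : ι → α)
    (hab : ∀ i ∈ s, ∀ j ∈ s, a i = a j ↔ b i = b j) :
    Nat.card {π : Perm α // ∀ i ∈ s, π (a i) = b i}
      = (Fintype.card α - #(s.image a)).factorial := by
  classical
  let g : α → α := fun x => if h : ∃ i ∈ s, a i = x then b h.choose else x
  have hg : ∀ i ∈ s, g (a i) = b i := fun i hi => by
    have h : ∃ j ∈ s, a j = a i := ⟨i, hi, rfl⟩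
    simp only [g, dif_pos h]
    exact (hab _ h.choose_spec.1 i hi).1 h.choose_spec.2
  have hinj : Set.InjOn g (s.image a) := by
    simp only [Set.InjOn, coe_image, Set.forall_mem_image]
    intro i hi j hj hij
    rw [hg i hi, hg j hj] at hij
    exact (hab i hi j hj).2 hij
  rw [← card_subtype_forall_mem_apply_eq_of_injOn hinj]
  refine Nat.card_congr (Equiv.subtypeEquivRight fun π => ?_)
  simp only [mem_image, forall_exists_index, and_imp, forall_apply_eq_imp_iff₂]
  exact forall₂_congr fun i hi => by rw [hg i hi]

end Equiv.Perm

theorem Setoid.card_fun_ker_eq {ι β : Type*} [Finite ι] [Finite β] (s : Setoid ι) :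
    Nat.card {f : ι → β // ∀ i j, f i = f j ↔ s i j}
      = (Nat.card β).descFactorial (Nat.card (Quotient s)) := by
  classical
  have := Fintype.ofFinite (Quotient s)
  have := Fintype.ofFinite β
  rw [Nat.card_eq_fintype_card (α := β), Nat.card_eq_fintype_card (α := Quotient s),
    ← Fintype.card_embedding_eq, ← Nat.card_eq_fintype_card]
  exact Nat.card_congr
    { toFun := fun f => ⟨Quotient.lift f.1 fun _ _ hij => (f.2 _ _).2 hij,
        fun x y => Quotient.inductionOn₂ x y fun _ _ hij => Quotient.sound ((f.2 _ _).1 hij)⟩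
      invFun := fun g => ⟨fun i => g ⟦i⟧, fun _ _ => g.injective.eq_iff.trans Quotient.eq⟩
      left_inv := fun _ => rfl
      right_inv := fun g => Function.Embedding.ext fun x => Quotient.inductionOn x fun _ => rfl }

section Trail

variable {k n : ℕ}

def letterPerm (σ : Fin k → Equiv.Perm (Fin n)) (a : Letter k) : Equiv.Perm (Fin n) :=
  if a.2 then σ a.1 else (σ a.1)⁻¹

theorem wordPerm_cons (σ : Fin k → Equiv.Perm (Fin n)) (a : Letter k) (w : List (Letter k)) :
    wordPerm (a :: w) σ = letterPerm σ a * wordPerm w σ :=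
  List.prod_cons

def trailOf (w : List (Letter k)) (σ : Fin k → Equiv.Perm (Fin n)) (x : Fin n)
    (i : Fin (w.length + 1)) : Fin n :=
  wordPerm (w.drop i) σ x

theorem trailOf_zero (w : List (Letter k)) (σ : Fin k → Equiv.Perm (Fin n)) (x : Fin n) :
    trailOf w σ x 0 = wordPerm w σ x := rfl

theorem trailOf_last (w : List (Letter k)) (σ : Fin k → Equiv.Perm (Fin n)) (x : Fin n) :
    trailOf w σ x (Fin.last w.length) = x := by
  simp [trailOf, wordPerm]

theorem trailOf_castSucc (w : List (Letter k)) (σ : Fin k → Equiv.Perm (Fin n)) (x : Fin n)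
    (h : Fin w.length) :
    trailOf w σ x h.castSucc = letterPerm σ (w.get h) (trailOf w σ x h.succ) := by
  simp only [trailOf, Fin.val_castSucc, Fin.val_succ, List.drop_eq_getElem_cons h.isLt,
    wordPerm_cons, List.get_eq_getElem, Equiv.Perm.mul_apply]

/- `w(σ)` applies its last letter first, so `σ_j` carries the value at `trailSrc w h` to the
value at `trailTgt w h`; for a positive letter this runs from `s_h` to `s_{h-1}`, against the
orientation used in `ecount`. -/
def trailSrc (w : List (Letter k)) (h : Fin w.length) : Fin (w.length + 1) :=
  if (w.get h).2 then h.succ else h.castSucc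

def trailTgt (w : List (Letter k)) (h : Fin w.length) : Fin (w.length + 1) :=
  if (w.get h).2 then h.castSucc else h.succ

def IsTrailHom (w : List (Letter k)) (σ : Fin k → Equiv.Perm (Fin n))
    (f : Fin (w.length + 1) → Fin n) : Prop :=
  ∀ h, σ (w.get h).1 (f (trailSrc w h)) = f (trailTgt w h)

instance (w : List (Letter k)) (σ : Fin k → Equiv.Perm (Fin n))
    (f : Fin (w.length + 1) → Fin n) : Decidable (IsTrailHom w σ f) :=
  Fintype.decidableForallFintype

theorem isTrailHom_iff {w : List (Letter k)} {σ : Fin k → Equiv.Perm (Fin n)}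
    {f : Fin (w.length + 1) → Fin n} :
    IsTrailHom w σ f ↔ ∀ h, f h.castSucc = letterPerm σ (w.get h) (f h.succ) := by
  refine forall_congr' fun h => ?_
  unfold trailSrc trailTgt letterPerm
  cases (w.get h).2 <;> simp [Equiv.eq_symm_apply, eq_comm]

theorem isTrailHom_trailOf (w : List (Letter k)) (σ : Fin k → Equiv.Perm (Fin n)) (x : Fin n) :
    IsTrailHom w σ (trailOf w σ x) :=
  isTrailHom_iff.2 (trailOf_castSucc w σ x)

theorem IsTrailHom.eq_trailOf {w : List (Letter k)} {σ : Fin k → Equiv.Perm (Fin n)}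
    {f : Fin (w.length + 1) → Fin n} (hf : IsTrailHom w σ f) :
    f = trailOf w σ (f (Fin.last w.length)) :=
  funext fun i => Fin.reverseInduction (trailOf_last w σ _).symm
    (fun h ih => by rw [isTrailHom_iff.1 hf h, ih, trailOf_castSucc]) i

theorem fixCount_wordPerm (w : List (Letter k)) (σ : Fin k → Equiv.Perm (Fin n)) :
    fixCount (wordPerm w σ)
      = #{f : Fin (w.length + 1) → Fin n |
          IsTrailHom w σ f ∧ f 0 = f (Fin.last w.length)} := by
  rw [fixCount, ← Fintype.card_subtype, ← Fintype.card_subtype]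
  refine Fintype.card_congr
    { toFun := fun x => ⟨trailOf w σ x, isTrailHom_trailOf w σ x,
        by rw [trailOf_zero, trailOf_last, x.2]⟩
      invFun := fun f => ⟨f.1 (Fin.last w.length), ?_⟩
      left_inv := fun x => Subtype.ext (trailOf_last w σ x)
      right_inv := fun f => Subtype.ext f.2.1.eq_trailOf.symm }
  rw [← trailOf_zero, ← f.2.1.eq_trailOf, f.2.2]

end Trail

section Quotients

variable {k n : ℕ} {w : List (Letter k)} {r : Fin (w.length + 1) → Fin (w.length + 1) → Bool}

def boolKer {ι α : Type*} [DecidableEq α] (f : ι → α) : ι → ι → Bool :=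
  fun i j => decide (f i = f j)

theorem boolKer_eq_iff {ι α : Type*} [DecidableEq α] {f : ι → α} {r : ι → ι → Bool} :
    boolKer f = r ↔ ∀ i j, f i = f j ↔ r i j = true := by
  simp only [funext_iff, boolKer]
  exact forall₂_congr fun i j => by cases r i j <;> simp

theorem realizableQuot_iff :
    RealizableQuot w r ↔ Equivalence (fun i j => r i j = true) ∧
      r 0 (Fin.last w.length) = true ∧
      ∀ h h', (w.get h).1 = (w.get h').1 →
        r (trailSrc w h) (trailSrc w h') = r (trailTgt w h) (trailTgt w h') := by
  have edge : ∀ h h' : Fin w.length,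
      (((w.get h).2 = (w.get h').2 → r h.castSucc h'.castSucc = r h.succ h'.succ) ∧
        ((w.get h).2 ≠ (w.get h').2 → r h.castSucc h'.succ = r h.succ h'.castSucc))
      ↔ r (trailSrc w h) (trailSrc w h') = r (trailTgt w h) (trailTgt w h') := by
    intro h h'
    unfold trailSrc trailTgt
    cases (w.get h).2 <;> cases (w.get h').2 <;> simp [eq_comm]
  simp only [RealizableQuot, edge]
  constructor
  · rintro ⟨hrefl, hsymm, htrans, h0, hedge⟩
    exact ⟨⟨hrefl, hsymm _ _, htrans _ _ _⟩, h0, hedge⟩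
  · rintro ⟨⟨hrefl, hsymm, htrans⟩, h0, hedge⟩
    exact ⟨hrefl, fun _ _ => hsymm, fun _ _ _ => htrans, h0, hedge⟩

def RealizableQuot.setoid (hr : RealizableQuot w r) : Setoid (Fin (w.length + 1)) :=
  ⟨fun i j => r i j = true, (realizableQuot_iff.1 hr).1⟩

theorem boolKer_realizableQuot {σ : Fin k → Equiv.Perm (Fin n)}
    {f : Fin (w.length + 1) → Fin n} (hf : IsTrailHom w σ f)
    (hclosed : f 0 = f (Fin.last w.length)) : RealizableQuot w (boolKer f) := by
  refine realizableQuot_iff.2 ⟨?_, decide_eq_true hclosed, fun h h' hl => ?_⟩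
  · simp only [boolKer, decide_eq_true_eq]
    exact ⟨fun _ => rfl, Eq.symm, Eq.trans⟩
  · simp only [boolKer, ← hf h, ← hf h', hl, (σ _).injective.eq_iff]

theorem blockOf_eq_iff (hr : RealizableQuot w r) {a b : Fin (w.length + 1)} :
    blockOf w r a = blockOf w r b ↔ r a b = true := by
  have hr := (realizableQuot_iff.1 hr).1
  simp only [blockOf, Finset.ext_iff, mem_filter, mem_univ, true_and]
  exact ⟨fun h => (h b).2 (hr.refl b), fun h c => ⟨hr.trans (hr.symm h), hr.trans h⟩⟩

theorem vcount_pos : 0 < vcount w r :=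
  card_pos.2 ⟨_, mem_image_of_mem _ (mem_univ 0)⟩

theorem vcount_eq_card_quotient (hr : RealizableQuot w r) :
    vcount w r = Nat.card (Quotient hr.setoid) := by
  classical
  rw [Nat.card_eq_fintype_card, ← card_univ,
    ← image_univ_of_surjective Quotient.mk_surjective, vcount]
  exact card_image_eq_of_eq_iff fun a _ b _ => by rw [blockOf_eq_iff hr, Quotient.eq]; rfl

theorem card_boolKer_eq (hr : RealizableQuot w r) :
    #{f : Fin (w.length + 1) → Fin n | boolKer f = r} = n.descFactorial (vcount w r) := by
  rw [← Fintype.card_subtype, ← Nat.card_eq_fintype_card,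
    Nat.card_congr (Equiv.subtypeEquivRight fun f => boolKer_eq_iff), vcount_eq_card_quotient hr]
  exact (Setoid.card_fun_ker_eq hr.setoid).trans
    (by rw [Nat.card_eq_fintype_card, Fintype.card_fin])

end Quotients

section Counting

variable {k n : ℕ} {w : List (Letter k)} {r : Fin (w.length + 1) → Fin (w.length + 1) → Bool}

def labelledEdges (w : List (Letter k)) (j : Fin k) : Finset (Fin w.length) :=
  univ.filter fun h => (w.get h).1 = j

theorem label_eq_of_mem_labelledEdges {j : Fin k} {h h' : Fin w.length}
    (hh : h ∈ labelledEdges w j) (hh' : h' ∈ labelledEdges w j) : (w.get h).1 = (w.get h').1 :=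
  (mem_filter.1 hh).2.trans (mem_filter.1 hh').2.symm

theorem ecount_le (j : Fin k) : ecount w r j ≤ w.length :=
  card_image_le.trans ((card_filter_le _ _).trans (card_fin _).le)

theorem ecount_eq_card_image (hr : RealizableQuot w r) {f : Fin (w.length + 1) → Fin n}
    (hf : boolKer f = r) (j : Fin k) :
    ecount w r j = #((labelledEdges w j).image fun h => f (trailSrc w h)) := by
  have hdir : ∀ h : Fin w.length,
      (if (w.get h).2 then (blockOf w r h.castSucc, blockOf w r h.succ)
        else (blockOf w r h.succ, blockOf w r h.castSucc))
      = (blockOf w r (trailTgt w h), blockOf w r (trailSrc w h)) := by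
    intro h
    unfold trailSrc trailTgt
    split_ifs <;> rfl
  obtain ⟨-, -, hedge⟩ := realizableQuot_iff.1 hr
  simp only [ecount, hdir]
  refine card_image_eq_of_eq_iff fun h hh h' hh' => ?_
  rw [Prod.ext_iff, blockOf_eq_iff hr, blockOf_eq_iff hr,
    ← hedge h h' (label_eq_of_mem_labelledEdges hh hh'), and_self, boolKer_eq_iff.1 hf]

theorem card_isTrailHom (hr : RealizableQuot w r) {f : Fin (w.length + 1) → Fin n}
    (hf : boolKer f = r) :
    #{σ : Fin k → Equiv.Perm (Fin n) | IsTrailHom w σ f}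
      = ∏ j, (n - ecount w r j).factorial := by
  obtain ⟨-, -, hedge⟩ := realizableQuot_iff.1 hr
  let Constraint (j : Fin k) (π : Equiv.Perm (Fin n)) : Prop :=
    ∀ h ∈ labelledEdges w j, π (f (trailSrc w h)) = f (trailTgt w h)
  have hsplit : ∀ σ : Fin k → Equiv.Perm (Fin n),
      IsTrailHom w σ f ↔ ∀ j, Constraint j (σ j) :=
    fun σ => ⟨fun hσ j h hh => (mem_filter.1 hh).2 ▸ hσ h,
      fun hσ h => hσ _ h (mem_filter.2 ⟨mem_univ _, rfl⟩)⟩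
  rw [← Fintype.card_subtype, ← Nat.card_eq_fintype_card, Nat.card_congr
    ((Equiv.subtypeEquivRight hsplit).trans (Equiv.subtypePiEquivPi (p := Constraint))),
    Nat.card_pi]
  refine prod_congr rfl fun j _ => ?_
  rw [Equiv.Perm.card_subtype_forall_apply_eq _ (fun h => f (trailSrc w h)),
    Fintype.card_fin, ecount_eq_card_image hr hf j]
  intro h hh h' hh'
  rw [boolKer_eq_iff.1 hf, boolKer_eq_iff.1 hf,
    hedge h h' (label_eq_of_mem_labelledEdges hh hh')]

open scoped Classical in
theorem sum_fixCount_wordPerm (w : List (Letter k)) :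
    ∑ σ : Fin k → Equiv.Perm (Fin n), fixCount (wordPerm w σ)
      = ∑ r ∈ univ.filter (RealizableQuot w),
          n.descFactorial (vcount w r) * ∏ j, (n - ecount w r j).factorial := by
  have hfiber : ∀ σ : Fin k → Equiv.Perm (Fin n), fixCount (wordPerm w σ)
      = ∑ r ∈ univ.filter (RealizableQuot w),
          #{f : Fin (w.length + 1) → Fin n | boolKer f = r ∧ IsTrailHom w σ f} := by
    intro σ
    rw [fixCount_wordPerm, card_eq_sum_card_fiberwise (f := boolKer)
      fun f hf => mem_filter.2 ⟨mem_univ _,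
        boolKer_realizableQuot (mem_filter.1 hf).2.1 (mem_filter.1 hf).2.2⟩]
    refine sum_congr rfl fun r hr => ?_
    rw [filter_filter]
    refine congrArg card (filter_congr fun f _ => ?_)
    have hclosed : boolKer f = r → f 0 = f (Fin.last w.length) := fun hf =>
      (boolKer_eq_iff.1 hf _ _).2 (realizableQuot_iff.1 (mem_filter.1 hr).2).2.1
    tauto
  simp only [hfiber]
  rw [sum_comm]
  refine sum_congr rfl fun r hr => ?_
  have hdouble := sum_card_bipartiteAbove_eq_sum_card_bipartiteBelow (s := univ)
    (t := {f : Fin (w.length + 1) → Fin n | boolKer f = r}) (fun σ f => IsTrailHom w σ f)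
  simp only [bipartiteAbove, bipartiteBelow, filter_filter] at hdouble
  rw [hdouble, sum_congr rfl fun f hf => card_isTrailHom (mem_filter.1 hr).2 (mem_filter.1 hf).2,
    sum_const, card_boolKer_eq (mem_filter.1 hr).2, smul_eq_mul]

end Counting

theorem Nat.cast_descFactorial_eq_prod_range {R : Type*} [CommRing R] (n : ℕ) :
    ∀ v : ℕ, (n.descFactorial v : R) = ∏ t ∈ range v, ((n : R) - t)
  | 0 => by simp
  | v + 1 => by
    rw [Nat.descFactorial_succ, prod_range_succ, ← cast_descFactorial_eq_prod_range n v,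
      Nat.cast_mul, mul_comm]
    rcases le_or_gt v n with hv | hv
    · rw [Nat.cast_sub hv]
    · simp [Nat.descFactorial_eq_zero_iff_lt.2 hv]

theorem cast_descFactorial_mul_prod_factorial_div_pow {k n v : ℕ} {e : Fin k → ℕ} (hv : 0 < v)
    (he : ∀ j, e j ≤ n) :
    ((n.descFactorial v * ∏ j, (n - e j).factorial : ℕ) : ℚ) / (n.factorial : ℚ) ^ k
      = n * ((∏ t ∈ range (v - 1), ((n : ℚ) - 1 - t)) /
          ∏ j, ∏ t ∈ range (e j), ((n : ℚ) - t)) := by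
  have hshift : (n : ℚ) * ∏ t ∈ range (v - 1), ((n : ℚ) - 1 - t) = n.descFactorial v := by
    rw [Nat.cast_descFactorial_eq_prod_range, ← Nat.sub_add_cancel hv, prod_range_succ']
    simp [sub_sub, add_comm, mul_comm]
  have hfac : ∀ j, (n.factorial : ℚ)
      = (n - e j).factorial * ∏ t ∈ range (e j), ((n : ℚ) - t) := fun j => by
    rw [← Nat.cast_descFactorial_eq_prod_range, ← Nat.cast_mul,
      Nat.factorial_mul_descFactorial (he j)]
  rw [← Fin.prod_const, prod_congr rfl fun j _ => hfac j, prod_mul_distrib,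
    Nat.cast_mul, Nat.cast_prod, mul_comm (n.descFactorial v : ℚ),
    mul_div_mul_left _ _ (prod_ne_zero_iff.2 fun j _ => by positivity), ← hshift, mul_div_assoc]

open scoped Classical in
theorem stmt8_general {k : ℕ} (w : List (Letter k)) (n : ℕ) (hn : w.length ≤ n) :
    (∑ σ : Fin k → Equiv.Perm (Fin n), (fixCount (wordPerm w σ) : ℚ)) /
        ((n.factorial : ℚ) ^ k)
      = n * ∑ r ∈ Finset.univ.filter (RealizableQuot w),
          (∏ t ∈ Finset.range (vcount w r - 1), ((n : ℚ) - 1 - t)) /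
            ∏ j : Fin k, ∏ t ∈ Finset.range (ecount w r j), ((n : ℚ) - t) := by
  rw [← Nat.cast_sum, sum_fixCount_wordPerm, Nat.cast_sum, sum_div, mul_sum]
  exact sum_congr rfl fun r _ =>
    cast_descFactorial_mul_prod_factorial_div_pow vcount_pos fun j => ecount_le j |>.trans hn

open scoped Classical in
/-- For every word `w` and all sufficiently large `n`, the expected number of fixed
points of `w(σ_1, …, σ_k)`, for independent uniform `σ_i ∈ S_n`, equals `n` times the
sum over realizable quotient graphs `Γ` of the trail of `w` of
`[(n−1)⋯(n−v_Γ+1)] / ∏_j [n(n−1)⋯(n−e_Γ^j+1)]`. -/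
theorem stmt8 {k : ℕ} (w : List (Letter k)) (n : ℕ) (hn : w.length ≤ n) (hn0 : 0 < n) :
    (∑ σ : Fin k → Equiv.Perm (Fin n), (fixCount (wordPerm w σ) : ℚ)) /
        ((n.factorial : ℚ) ^ k)
      = n * ∑ r ∈ Finset.univ.filter (RealizableQuot w),
          (∏ t ∈ Finset.range (vcount w r - 1), ((n : ℚ) - 1 - t)) /
            ∏ j : Fin k, ∏ t ∈ Finset.range (ecount w r j), ((n : ℚ) - t) :=
  stmt8_general w n hn
end

section
/- Let w be a cyclically reduced word of length m over Σ_k that is not the identity and not a proper power. Let Γ̃_w be the simple directed cycle of length m whose edges are labeled and directed according to the letters of w. Define the graph Υ whose vertices are the C(m,2) unordered pairs of distinct vertices of Γ̃_w, with a j-labeled edge from {origin(ε_1), origin(ε_2)} to {terminus(ε_1), terminus(ε_2)} for each unordered pair {ε_1, ε_2} of distinct j-labeled edges of Γ̃_w. Then Υ contains no cycles, and hence the number of connected components of Υ equals C(m,2) − Σ_{j=1}^k C(e^j,2), where e^j is the number of j-labeled edges of Γ̃_w. -/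
/-- The cyclic successor of a vertex of the cycle graph `Γ̃_w` (on `|w|` vertices). -/
def nxt {k : ℕ} {w : List (Letter k)} (h : Fin w.length) : Fin w.length :=
  ⟨((h : ℕ) + 1) % w.length, Nat.mod_lt _ h.pos⟩

/-- The origin of the `h`-th edge of `Γ̃_w` (the edge joins `v_h` and `v_{h+1}` and is
directed according to the sign of the `h`-th letter of `w`). -/
def org {k : ℕ} (w : List (Letter k)) (h : Fin w.length) : Fin w.length :=
  if (w.get h).2 then h else nxt h

/-- The terminus of the `h`-th edge of `Γ̃_w`. -/
def ter {k : ℕ} (w : List (Letter k)) (h : Fin w.length) : Fin w.length :=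
  if (w.get h).2 then nxt h else h

/-- The pair-graph `Υ` of `Γ̃_w`: its vertices are the unordered pairs of distinct
vertices of `Γ̃_w`, and for every pair of distinct equally-labeled edges `ε₁, ε₂` of
`Γ̃_w` there is an edge joining `{origin ε₁, origin ε₂}` and `{terminus ε₁, terminus ε₂}`. -/
def Upsilon {k : ℕ} (w : List (Letter k)) :
    SimpleGraph {p : Sym2 (Fin w.length) // ¬ p.IsDiag} where
  Adj P Q := P ≠ Q ∧ ∃ h h' : Fin w.length, h ≠ h' ∧ (w.get h).1 = (w.get h').1 ∧
    ((P.1 = s(org w h, org w h') ∧ Q.1 = s(ter w h, ter w h')) ∨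
     (Q.1 = s(org w h, org w h') ∧ P.1 = s(ter w h, ter w h')))
  symm := by
    constructor
    rintro P Q ⟨hne, h, h', hhh, hl, hc⟩
    exact ⟨hne.symm, h, h', hhh, hl, hc.symm⟩
  loopless := by constructor; rintro P ⟨hne, -⟩; exact hne rfl

/-- The number of `j`-labeled edges of `Γ̃_w`. -/
def labelCount {k : ℕ} (w : List (Letter k)) (j : Fin k) : ℕ :=
  (Finset.univ.filter fun h : Fin w.length => (w.get h).1 = j).card

namespace SimpleGraph

variable {V : Type*} {G : SimpleGraph V}

theorem Reachable.deleteEdges_singleton_or {u v x y : V} (h : G.Reachable x y) :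
    (G.deleteEdges {s(u, v)}).Reachable x y ∨
      (G.deleteEdges {s(u, v)}).Reachable x u ∧ (G.deleteEdges {s(u, v)}).Reachable v y ∨
      (G.deleteEdges {s(u, v)}).Reachable x v ∧ (G.deleteEdges {s(u, v)}).Reachable u y := by
  obtain ⟨p⟩ := h
  induction p with
  | nil => exact .inl .rfl
  | @cons a b _ hab _ ih =>
    by_cases hdel : (G.deleteEdges {s(u, v)}).Adj a b
    · have := hdel.reachable
      rcases ih with h | ⟨h₁, h₂⟩ | ⟨h₁, h₂⟩
      · exact .inl (this.trans h)
      · exact .inr (.inl ⟨this.trans h₁, h₂⟩)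
      · exact .inr (.inr ⟨this.trans h₁, h₂⟩)
    · have : s(a, b) = s(u, v) := not_not.1 fun hne => hdel (deleteEdges_adj.2 ⟨hab, hne⟩)
      rcases Sym2.eq_iff.1 this with ⟨rfl, rfl⟩ | ⟨rfl, rfl⟩
      · rcases ih with h | ⟨-, h⟩ | ⟨-, h⟩
        · exact .inr (.inl ⟨.rfl, h⟩)
        · exact .inr (.inl ⟨.rfl, h⟩)
        · exact .inl h
      · rcases ih with h | ⟨-, h⟩ | ⟨-, h⟩
        · exact .inr (.inr ⟨.rfl, h⟩)
        · exact .inl h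
        · exact .inr (.inr ⟨.rfl, h⟩)

theorem IsBridge.card_connectedComponent_deleteEdges [Finite V] {u v : V} (huv : G.Adj u v)
    (hb : G.IsBridge s(u, v)) :
    Nat.card (G.deleteEdges {s(u, v)}).ConnectedComponent = Nat.card G.ConnectedComponent + 1 := by
  classical
  set G' := G.deleteEdges {s(u, v)}
  have hb' : G'.connectedComponentMk u ≠ G'.connectedComponentMk v :=
    fun h => isBridge_iff.1 hb (ConnectedComponent.exact h)
  let φ : {c : G'.ConnectedComponent // c ≠ G'.connectedComponentMk v} → G.ConnectedComponent :=
    fun c => c.1.map (Hom.ofLE (deleteEdges_le _))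
  have hφ : φ.Bijective := by
    constructor
    · rintro ⟨c, hc⟩ ⟨d, hd⟩ hcd
      induction c using ConnectedComponent.ind with | _ x =>
      induction d using ConnectedComponent.ind with | _ y =>
      rcases (ConnectedComponent.exact hcd).deleteEdges_singleton_or (u := u) (v := v) with
        h | ⟨-, h⟩ | ⟨h, -⟩
      · exact Subtype.ext (ConnectedComponent.sound h)
      · exact absurd (ConnectedComponent.sound h.symm) hd
      · exact absurd (ConnectedComponent.sound h) hc
    · intro c
      induction c using ConnectedComponent.ind with | _ x =>
      by_cases hx : G'.connectedComponentMk x = G'.connectedComponentMk v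
      · refine ⟨⟨_, hb'⟩, ?_⟩
        exact ConnectedComponent.sound <|
          huv.reachable.trans ((ConnectedComponent.exact hx).symm.mono (deleteEdges_le _))
      · exact ⟨⟨_, hx⟩, rfl⟩
  rw [← Nat.card_congr (Equiv.ofBijective φ hφ), ← Finite.card_option,
    Nat.card_congr (Equiv.optionSubtypeNe _)]

theorem IsAcyclic.card_connectedComponent_add_card_edgeSet [Finite V] (hG : G.IsAcyclic) :
    Nat.card G.ConnectedComponent + Nat.card G.edgeSet = Nat.card V := by
  induction hn : Nat.card G.edgeSet generalizing G with
  | zero =>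
    have : G = ⊥ := by
      rw [← edgeSet_eq_empty, ← Set.isEmpty_coe_sort]
      exact (Nat.card_eq_zero.1 hn).resolve_right (not_infinite_iff_finite.2 inferInstance)
    subst this
    refine Nat.card_congr (Equiv.ofBijective _ ⟨fun x y h => ?_, fun c => c.exists_rep⟩).symm
    exact reachable_bot.1 (ConnectedComponent.exact h)
  | succ n ih =>
    obtain ⟨⟨e, he⟩⟩ : Nonempty G.edgeSet := Nat.card_pos_iff.1 (by omega) |>.1
    induction e using Sym2.ind with | _ u v =>
    have hcard : Nat.card (G.deleteEdges {s(u, v)}).edgeSet = n := by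
      rw [edgeSet_deleteEdges, Nat.card_coe_set_eq, Set.ncard_sdiff_singleton_of_mem he,
        ← Nat.card_coe_set_eq, hn, Nat.add_sub_cancel]
    have := ih (hG.anti (deleteEdges_le _)) hcard
    rw [(isAcyclic_iff_forall_adj_isBridge.1 hG he).card_connectedComponent_deleteEdges he] at this
    omega

theorem Walk.IsCycle.exists_seq_adj_ne {u : V} {c : G.Walk u u} (hc : c.IsCycle) :
    ∃ F : ℕ → V, ∀ i, G.Adj (F i) (F (i + 1)) ∧ F (i + 2) ≠ F i := by
  set n := c.length with hn
  have hn3 : 3 ≤ n := hc.three_le_length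
  refine ⟨fun i => c.getVert (i % n), fun i => ?_⟩
  simp only [← Nat.mod_add_mod i n]
  have hj : i % n < n := Nat.mod_lt _ (by omega)
  generalize i % n = j at hj ⊢
  constructor
  · have : c.getVert ((j + 1) % n) = c.getVert (j + 1) := by
      rcases Nat.lt_or_ge (j + 1) n with hlt | hge
      · rw [Nat.mod_eq_of_lt hlt]
      · rw [show j + 1 = n by omega, Nat.mod_self, Walk.getVert_zero, hn, Walk.getVert_length]
    rw [this]
    exact c.adj_getVert_succ hj
  · intro h
    have hlt : (j + 2) % n < n := Nat.mod_lt _ (by omega)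
    have := hc.getVert_injOn' (by simp only [Set.mem_ofPred_eq]; omega)
      (by simp only [Set.mem_ofPred_eq]; omega) h
    rcases Nat.lt_or_ge (j + 2) n with hlt | hge
    · rw [Nat.mod_eq_of_lt hlt] at this; omega
    · rw [Nat.mod_eq_sub_mod hge, Nat.mod_eq_of_lt (by omega)] at this; omega

end SimpleGraph

namespace List

variable {α M : Type*} [Monoid M]

/-- For nonempty lists this is primitivity (not being a proper power); `[]` is not primitive. -/
def IsPrimitive (l : List α) : Prop :=
  ∀ n, l.rotate n = l → l.length ∣ n

theorem prod_eq_pow_of_append_comm {u v : List M} (h : u ++ v = v ++ u) {q : ℕ}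
    (hv : v.length = u.length * q) : v.prod = u.prod ^ q := by
  induction q generalizing v with
  | zero => simp [length_eq_zero_iff.1 (by simpa using hv)]
  | succ q ih =>
    have hprefix : v.take u.length = u := by
      have := congrArg (take u.length) h
      rwa [take_left, take_append_of_le_length (hv ▸ Nat.le_mul_of_pos_right _ q.succ_pos),
        eq_comm] at this
    obtain ⟨v, rfl⟩ : ∃ v', v = u ++ v' := ⟨v.drop u.length, by
      conv_lhs => rw [← take_append_drop u.length v, hprefix]⟩
    have h' : u ++ v = v ++ u := by simpa using h
    rw [prod_append, ih h' (by rw [length_append, mul_add_one] at hv; omega), pow_succ']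

theorem rotate_one_iterate (l : List α) (n : ℕ) : (fun l => l.rotate 1)^[n] l = l.rotate n := by
  induction n with
  | zero => simp
  | succ n ih => rw [Function.iterate_succ_apply', ih, rotate_rotate]

theorem rotate_gcd_eq_self {l : List α} {m n : ℕ} (hm : l.rotate m = l) (hn : l.rotate n = l) :
    l.rotate (m.gcd n) = l := by
  have := Function.IsPeriodicPt.gcd (f := fun l : List α => l.rotate 1) (x := l)
    (by simpa [Function.IsPeriodicPt, Function.IsFixedPt, rotate_one_iterate] using hm)
    (by simpa [Function.IsPeriodicPt, Function.IsFixedPt, rotate_one_iterate] using hn)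
  simpa [Function.IsPeriodicPt, Function.IsFixedPt, rotate_one_iterate] using this

/-- The rotations fixing `l` are closed under `gcd`, so one by a proper divisor `p` of `|l|`
fixes `l`, and then `l` is a power of its prefix of length `p`. -/
theorem exists_prod_eq_pow_of_not_isPrimitive {l : List M} (hl : ¬ l.IsPrimitive) :
    ∃ g : M, ∃ e, 2 ≤ e ∧ l.prod = g ^ e := by
  simp only [IsPrimitive, not_forall] at hl
  obtain ⟨n, hn, hdvd⟩ := hl
  rcases eq_or_ne l [] with rfl | hl
  · exact ⟨1, 2, le_rfl, by simp⟩
  have hd0 : 0 < n % l.length := Nat.pos_of_ne_zero (mt Nat.dvd_of_mod_eq_zero hdvd)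
  have hdl : n % l.length < l.length := Nat.mod_lt _ (length_pos_iff.2 hl)
  set p := (n % l.length).gcd l.length
  have hp : l.rotate p = l := rotate_gcd_eq_self (by rwa [rotate_mod]) (rotate_length l)
  have hple : p ≤ n % l.length := Nat.le_of_dvd hd0 (Nat.gcd_dvd_left _ _)
  obtain ⟨e, he⟩ : p ∣ l.length := Nat.gcd_dvd_right _ _
  obtain _ | _ | e := e
  · rw [mul_zero] at he; omega
  · rw [zero_add, mul_one] at he; omega
  have hcomm : l.take p ++ l.drop p = l.drop p ++ l.take p := by
    rw [take_append_drop, ← rotate_eq_drop_append_take (by omega), hp]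
  have hlen : (l.drop p).length = (l.take p).length * (e + 1) := by
    rw [length_drop, length_take, he, Nat.min_eq_left (by nlinarith)]
    rw [mul_add, mul_add, mul_one]; omega
  refine ⟨(l.take p).prod, e + 2, by omega, ?_⟩
  conv_lhs => rw [← take_append_drop p l, prod_append, prod_eq_pow_of_append_comm hcomm hlen,
    ← pow_succ']

end List

theorem exists_seq_of_forall_exists {α : Type*} {p : ℕ → α → Prop} {r : ℕ → α → α → Prop}
    (h₀ : ∃ a, p 0 a) (hsucc : ∀ i a, p i a → ∃ b, p (i + 1) b ∧ r i a b) :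
    ∃ f : ℕ → α, ∀ i, p i (f i) ∧ r i (f i) (f (i + 1)) := by
  choose a₀ ha₀ using h₀
  choose next hnext using hsucc
  let f : (i : ℕ) → {a // p i a} := fun i =>
    Nat.rec ⟨a₀, ha₀⟩ (fun i a => ⟨next i a.1 a.2, (hnext i a.1 a.2).1⟩) i
  exact ⟨fun i => (f i).1, fun i => ⟨(f i).2, (hnext i _ (f i).2).2⟩⟩

section Cycle

variable {k : ℕ} {w : List (Letter k)}

@[simp] theorem Letter.inv_inv_s10 (x : Letter k) : x.inv.inv = x := by
  simp [Letter.inv]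

theorem Letter.inv_ne_self_s10 (x : Letter k) : x.inv ≠ x := by
  simp [Letter.inv, Prod.ext_iff]

theorem isPrimitive_of_not_exists_toFree_eq_pow
    (hnp : ¬ ∃ (g : FreeGroup (Fin k)) (d : ℕ), 2 ≤ d ∧ toFree w = g ^ d) : w.IsPrimitive := by
  intro n hn
  by_contra hdvd
  exact hnp <| List.exists_prod_eq_pow_of_not_isPrimitive fun hprim => hdvd <| by
    simpa using hprim n (by rw [← List.map_rotate, hn])

theorem CyclicallyReduced.get_nxt_ne (hcyc : CyclicallyReduced w) (a : Fin w.length) :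
    w.get (nxt a) ≠ (w.get a).inv :=
  hcyc a

theorem val_nxt (a : Fin w.length) : (nxt a).val = (a.val + 1) % w.length := rfl

theorem val_nxt_iterate (n : ℕ) (a : Fin w.length) :
    (nxt^[n] a).val = (a.val + n) % w.length := by
  induction n with
  | zero => simp [Nat.mod_eq_of_lt a.isLt]
  | succ n ih => rw [Function.iterate_succ_apply', val_nxt, ih, Nat.mod_add_mod, Nat.add_assoc]

theorem nxt_injective : Function.Injective (nxt (w := w)) := by
  intro a b h
  have : a.val % w.length = b.val % w.length :=
    Nat.ModEq.add_right_cancel' 1 (congrArg Fin.val h : (a.val + 1) % _ = (b.val + 1) % _)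
  exact Fin.ext (by rwa [Nat.mod_eq_of_lt a.isLt, Nat.mod_eq_of_lt b.isLt] at this)

theorem nxt_iterate_add_sub (a b : Fin w.length) : nxt^[b + w.length - a] a = b := by
  apply Fin.ext
  rw [val_nxt_iterate, show a.val + (b + w.length - a) = b + w.length by omega, Nat.add_mod_right,
    Nat.mod_eq_of_lt b.isLt]

theorem nxt_iterate_eq_self_iff {n : ℕ} {a : Fin w.length} : nxt^[n] a = a ↔ w.length ∣ n := by
  rw [Fin.ext_iff, val_nxt_iterate, ← Nat.modEq_zero_iff_dvd]
  conv_lhs => rhs; rw [← Nat.mod_eq_of_lt a.isLt, ← Nat.add_zero a.val]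
  exact ⟨Nat.ModEq.add_left_cancel' _, Nat.ModEq.add_left _⟩

theorem nxt_ne_self (hm : 2 ≤ w.length) (a : Fin w.length) : nxt a ≠ a := fun h =>
  absurd (Nat.le_of_dvd one_pos (nxt_iterate_eq_self_iff (n := 1).1 h)) (by omega)

theorem nxt_nxt_ne_self (hm : 3 ≤ w.length) (a : Fin w.length) : nxt (nxt a) ≠ a := fun h =>
  absurd (Nat.le_of_dvd two_pos (nxt_iterate_eq_self_iff (n := 2).1 h)) (by omega)

theorem rotate_eq_self_of_get_nxt_iterate {n : ℕ} (h : ∀ t, w.get (nxt^[n] t) = w.get t) :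
    w.rotate n = w := by
  refine List.ext_getElem (by simp) fun i hi hi' => ?_
  have := h ⟨i, hi'⟩
  simp only [List.get_eq_getElem, val_nxt_iterate] at this
  rw [List.getElem_rotate, this]

end Cycle

section Reading

variable {k : ℕ} {w : List (Letter k)} {ξ : ℕ → Letter k} {A B : ℕ → Fin w.length}

/-- In `Γ̃_w`, reading the letter `x` leads from `a` to `b`: either along the edge `a`
forwards, or along the edge `b` backwards. -/
def Step (w : List (Letter k)) (a : Fin w.length) (x : Letter k) (b : Fin w.length) : Prop :=
  w.get a = x ∧ b = nxt a ∨ w.get b = x.inv ∧ a = nxt b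

theorem Step.symm {a b : Fin w.length} {x : Letter k} (h : Step w a x b) : Step w b x.inv a := by
  rcases h with h | h
  · exact .inr (by simpa using h)
  · exact .inl h

theorem Step.right_unique (hcyc : CyclicallyReduced w) {a b b' : Fin w.length} {x : Letter k}
    (h : Step w a x b) (h' : Step w a x b') : b = b' := by
  rcases h with ⟨ha, rfl⟩ | ⟨hb, rfl⟩ <;> rcases h' with ⟨ha', rfl⟩ | ⟨hb', hab'⟩
  · rfl
  · exact absurd (by rw [← hab', ha, hb', Letter.inv_inv_s10]) (hcyc.get_nxt_ne b')
  · exact absurd (by rw [ha', hb, Letter.inv_inv_s10]) (hcyc.get_nxt_ne b)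
  · exact nxt_injective hab'

theorem Step.left_unique (hcyc : CyclicallyReduced w) {a a' b : Fin w.length} {x : Letter k}
    (h : Step w a x b) (h' : Step w a' x b) : a = a' :=
  h.symm.right_unique hcyc h'.symm

theorem step_org_ter (h : Fin w.length) : Step w (org w h) ((w.get h).1, true) (ter w h) := by
  unfold org ter
  cases hb : (w.get h).2
  · exact .inr ⟨Prod.ext rfl hb, rfl⟩
  · exact .inl ⟨Prod.ext rfl hb, rfl⟩

theorem reads_forward_or_backward (hξ : ∀ i, ξ (i + 1) ≠ (ξ i).inv)
    (hA : ∀ i, Step w (A i) (ξ i) (A (i + 1))) :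
    (∀ i, w.get (A i) = ξ i ∧ A (i + 1) = nxt (A i)) ∨
      (∀ i, w.get (A (i + 1)) = (ξ i).inv ∧ A i = nxt (A (i + 1))) := by
  rcases hA 0 with h0 | h0
  · refine .inl fun i => ?_
    induction i with
    | zero => exact h0
    | succ i ih =>
      refine (hA (i + 1)).resolve_right fun ⟨hget, hnxt⟩ => hξ i ?_
      have : A i = A (i + 2) := nxt_injective (ih.2.symm.trans hnxt)
      rw [← ih.1, this, hget, Letter.inv_inv_s10]
  · refine .inr fun i => ?_
    induction i with
    | zero => exact h0
    | succ i ih => exact (hA (i + 1)).resolve_left fun ⟨hget, _⟩ => hξ i (hget ▸ ih.1)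

theorem eq_nxt_iterate (hA : ∀ i, A (i + 1) = nxt (A i)) (i : ℕ) : A i = nxt^[i] (A 0) := by
  induction i with
  | zero => rfl
  | succ i ih => rw [hA, ih, Function.iterate_succ_apply']

theorem nxt_iterate_eq (hA : ∀ i, A i = nxt (A (i + 1))) (i : ℕ) : nxt^[i] (A i) = A 0 := by
  induction i with
  | zero => rfl
  | succ i ih => rw [Function.iterate_succ_apply, ← hA, ih]

theorem head_eq_of_reads_forward (hprim : w.IsPrimitive)
    (hA : ∀ i, w.get (A i) = ξ i ∧ A (i + 1) = nxt (A i))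
    (hB : ∀ i, w.get (B i) = ξ i ∧ B (i + 1) = nxt (B i)) : A 0 = B 0 := by
  set d := (B 0).val + w.length - (A 0).val
  have hshift : ∀ i, B i = nxt^[d] (A i) := fun i => by
    rw [eq_nxt_iterate (fun i => (hA i).2), eq_nxt_iterate (fun i => (hB i).2),
      ← nxt_iterate_add_sub (A 0) (B 0), ← Function.iterate_add_apply,
      ← Function.iterate_add_apply, add_comm]
  have hper : ∀ t, w.get (nxt^[d] t) = w.get t := fun t => by
    have ht : A (t + w.length - A 0) = t := by
      rw [eq_nxt_iterate (fun i => (hA i).2), nxt_iterate_add_sub]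
    rw [← ht, ← hshift, (hA _).1, (hB _).1]
  rw [← nxt_iterate_add_sub (A 0) (B 0),
    nxt_iterate_eq_self_iff.2 (hprim _ (rotate_eq_self_of_get_nxt_iterate hper))]

theorem head_eq_of_reads_backward (hprim : w.IsPrimitive)
    (hA : ∀ i, w.get (A (i + 1)) = (ξ i).inv ∧ A i = nxt (A (i + 1)))
    (hB : ∀ i, w.get (B (i + 1)) = (ξ i).inv ∧ B i = nxt (B (i + 1))) : A 0 = B 0 := by
  set d := (B 0).val + w.length - (A 0).val
  have hshift : ∀ i, B i = nxt^[d] (A i) := fun i => by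
    induction i with
    | zero => exact (nxt_iterate_add_sub _ _).symm
    | succ i ih =>
      apply nxt_injective
      rw [← (hB i).2, ih, (hA i).2, Function.Commute.iterate_self nxt d]
  have hper : ∀ t, w.get (nxt^[d] t) = w.get t := fun t => by
    set j := (A 0).val + w.length - t with hj
    have ht : A j = t := nxt_injective.iterate j <| by
      rw [nxt_iterate_eq (fun i => (hA i).2), hj, nxt_iterate_add_sub]
    obtain ⟨i, hi⟩ : ∃ i, j = i + 1 := ⟨j - 1, by omega⟩
    rw [← ht, ← hshift, hi, (hA i).1, (hB i).1]
  rw [← nxt_iterate_add_sub (A 0) (B 0),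
    nxt_iterate_eq_self_iff.2 (hprim _ (rotate_eq_self_of_get_nxt_iterate hper))]

/-- The two readings cross after about half the distance from `A 0` to `B 0`: then either
`B (i + 1) = A i`, and `ξ i` is its own inverse, or `B (i + 1) = nxt (A i)`, and `w` has two
consecutive inverse letters. -/
theorem not_reads_forward_backward (hcyc : CyclicallyReduced w)
    (hA : ∀ i, w.get (A i) = ξ i ∧ A (i + 1) = nxt (A i))
    (hB : ∀ i, w.get (B (i + 1)) = (ξ i).inv ∧ B i = nxt (B (i + 1))) : False := by
  set r := (B 0).val + w.length - (A 0).val - 1 with hr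
  set i := r / 2 with hi
  have hmeet : B (i + 1) = nxt^[r % 2] (A i) := by
    apply nxt_injective.iterate (i + 1)
    rw [nxt_iterate_eq (fun i => (hB i).2), eq_nxt_iterate (fun i => (hA i).2),
      ← Function.iterate_add_apply, ← Function.iterate_add_apply,
      show i + 1 + r % 2 + i = (B 0).val + w.length - (A 0).val by have := (A 0).isLt; omega,
      nxt_iterate_add_sub]
  have hget : w.get (B (i + 1)) = (w.get (A i)).inv := by rw [(hB i).1, (hA i).1]
  rcases Nat.mod_two_eq_zero_or_one r with h | h <;> rw [h] at hmeet
  · exact Letter.inv_ne_self_s10 _ (hmeet ▸ hget).symm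
  · exact hcyc.get_nxt_ne (A i) (by rw [← hget, hmeet]; rfl)

theorem head_eq_of_reads (hcyc : CyclicallyReduced w) (hprim : w.IsPrimitive)
    (hξ : ∀ i, ξ (i + 1) ≠ (ξ i).inv) (hA : ∀ i, Step w (A i) (ξ i) (A (i + 1)))
    (hB : ∀ i, Step w (B i) (ξ i) (B (i + 1))) : A 0 = B 0 := by
  rcases reads_forward_or_backward hξ hA with hA | hA <;>
    rcases reads_forward_or_backward hξ hB with hB | hB
  · exact head_eq_of_reads_forward hprim hA hB
  · exact (not_reads_forward_backward hcyc hA hB).elim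
  · exact (not_reads_forward_backward hcyc hB hA).elim
  · exact head_eq_of_reads_backward hprim hA hB

theorem eq_of_reads_periodic (hcyc : CyclicallyReduced w) (hprim : w.IsPrimitive)
    (hξ : ∀ i, ξ (i + 1) ≠ (ξ i).inv) {s : ℕ} (hs : ∀ i, ξ (i + s) = ξ i)
    (hA : ∀ i, Step w (A i) (ξ i) (A (i + 1))) : A s = A 0 := by
  simpa using (head_eq_of_reads hcyc hprim hξ hA (B := fun i => A (i + s)) fun i => by
    simpa [hs, Nat.add_right_comm] using hA (i + s)).symm

theorem eq_of_step_of_step (hcyc : CyclicallyReduced w) (hprim : w.IsPrimitive)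
    {a b : Fin w.length} {x : Letter k} (hab : Step w a x b) (hba : Step w b x a) : a = b := by
  have hA : ∀ i, Step w (if i % 2 = 0 then a else b) x (if (i + 1) % 2 = 0 then a else b) := by
    intro i
    rcases Nat.mod_two_eq_zero_or_one i with h | h
    · simpa [h, show (i + 1) % 2 = 1 by omega] using hab
    · simpa [h, show (i + 1) % 2 = 0 by omega] using hba
  simpa using (eq_of_reads_periodic hcyc hprim (fun _ => Letter.inv_ne_self_s10 x ∘ Eq.symm)
    (s := 1) (fun _ => rfl) hA).symm

theorem eq_of_step_square (hcyc : CyclicallyReduced w) (hprim : w.IsPrimitive)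
    {a b t t' : Fin w.length} {x z : Letter k} (h₁ : Step w a x t) (h₂ : Step w t z b)
    (h₃ : Step w b x t') (h₄ : Step w t' z a) : a = b := by
  by_cases hz : z = x.inv
  · subst hz
    exact h₁.left_unique hcyc (by simpa using h₂.symm)
  set A : ℕ → Fin w.length := fun i =>
    if i % 4 = 0 then a else if i % 4 = 1 then t else if i % 4 = 2 then b else t'
  set ξ : ℕ → Letter k := fun i => if i % 2 = 0 then x else z
  have hξ : ∀ i, ξ (i + 1) ≠ (ξ i).inv := by
    intro i
    rcases Nat.mod_two_eq_zero_or_one i with h | h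
    · simpa [ξ, h, show (i + 1) % 2 = 1 by omega] using hz
    · simp only [ξ, h, show (i + 1) % 2 = 0 by omega, ↓reduceIte, one_ne_zero]
      exact fun hx => hz (by rw [hx, Letter.inv_inv_s10])
  have hA : ∀ i, Step w (A i) (ξ i) (A (i + 1)) := by
    intro i
    rcases (by omega : i % 4 = 0 ∨ i % 4 = 1 ∨ i % 4 = 2 ∨ i % 4 = 3) with h | h | h | h
    · simpa [A, ξ, h, show (i + 1) % 4 = 1 by omega, show i % 2 = 0 by omega] using h₁
    · simpa [A, ξ, h, show (i + 1) % 4 = 2 by omega, show i % 2 = 1 by omega] using h₂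
    · simpa [A, ξ, h, show (i + 1) % 4 = 3 by omega, show i % 2 = 0 by omega] using h₃
    · simpa [A, ξ, h, show (i + 1) % 4 = 0 by omega, show i % 2 = 1 by omega] using h₄
  have hs : ∀ i, ξ (i + 2) = ξ i := fun i => by simp only [ξ, Nat.add_mod_right]
  simpa [A] using (eq_of_reads_periodic hcyc hprim hξ hs hA).symm

end Reading

section Acyclic

variable {k : ℕ} {w : List (Letter k)}

theorem Upsilon.exists_step_of_adj {P Q : {p : Sym2 (Fin w.length) // ¬ p.IsDiag}}
    (hPQ : (Upsilon w).Adj P Q) {a b : Fin w.length} (hP : P.1 = s(a, b)) :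
    ∃ x a' b', Q.1 = s(a', b') ∧ Step w a x a' ∧ Step w b x b' := by
  obtain ⟨-, h, h', -, hlab, hPQ⟩ := hPQ
  have hs := step_org_ter h
  have hs' := step_org_ter h'
  rw [← hlab] at hs'
  obtain ⟨x, c, d, c', d', hPc, hQc, hc, hd⟩ : ∃ x c d c' d', P.1 = s(c, d) ∧ Q.1 = s(c', d') ∧
      Step w c x c' ∧ Step w d x d' := by
    rcases hPQ with ⟨hP', hQ'⟩ | ⟨hQ', hP'⟩
    · exact ⟨_, _, _, _, _, hP', hQ', hs, hs'⟩
    · exact ⟨_, _, _, _, _, hP', hQ', hs.symm, hs'.symm⟩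
  rcases Sym2.eq_iff.1 (hP.symm.trans hPc) with ⟨rfl, rfl⟩ | ⟨rfl, rfl⟩
  · exact ⟨x, c', d', hQc, hc, hd⟩
  · exact ⟨x, d', c', hQc.trans Sym2.eq_swap, hd, hc⟩

theorem upsilon_isAcyclic (hcyc : CyclicallyReduced w) (hprim : w.IsPrimitive) :
    (Upsilon w).IsAcyclic := by
  intro P c hc
  obtain ⟨F, hF⟩ := hc.exists_seq_adj_ne
  obtain ⟨AB, hAB⟩ := exists_seq_of_forall_exists
    (p := fun i (ab : Fin w.length × Fin w.length) => (F i).1 = s(ab.1, ab.2))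
    (r := fun _ ab ab' => ∃ x, Step w ab.1 x ab'.1 ∧ Step w ab.2 x ab'.2)
    (by induction (F 0).1 using Sym2.ind with | _ a b => exact ⟨(a, b), rfl⟩)
    fun i ab hab => by
      obtain ⟨x, a', b', hQ, ha, hb⟩ := Upsilon.exists_step_of_adj (hF i).1 hab
      exact ⟨(a', b'), hQ, x, ha, hb⟩
  choose ξ hξ using fun i => (hAB i).2
  -- a backtracking letter would make both lifts, hence `F`, backtrack
  have hred : ∀ i, ξ (i + 1) ≠ (ξ i).inv := by
    intro i h
    have hback : ∀ C : ℕ → Fin w.length, (∀ j, Step w (C j) (ξ j) (C (j + 1))) →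
        C (i + 2) = C i := fun C hC =>
      Step.left_unique hcyc (by simpa [h] using (hC (i + 1)).symm) (hC i)
    refine (hF i).2 (Subtype.ext ?_)
    rw [(hAB (i + 2)).1, (hAB i).1, hback (fun j => (AB j).1) fun j => (hξ j).1,
      hback (fun j => (AB j).2) fun j => (hξ j).2]
  have := head_eq_of_reads hcyc hprim hred (A := fun i => (AB i).1) (B := fun i => (AB i).2)
    (fun i => (hξ i).1) (fun i => (hξ i).2)
  exact (F 0).2 (by rw [(hAB 0).1]; exact Sym2.mk_isDiag_iff.2 this)

end Acyclic

section EdgeCount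

variable {k : ℕ} {w : List (Letter k)}

def labelPairs (w : List (Letter k)) : Finset (Sym2 (Fin w.length)) :=
  Finset.univ.biUnion fun j =>
    (Finset.univ.filter fun h : Fin w.length => (w.get h).1 = j).offDiag.image Sym2.mk.uncurry

def upsilonEdge (w : List (Letter k)) (e : Sym2 (Fin w.length)) : Sym2 (Sym2 (Fin w.length)) :=
  s(e.map (org w), e.map (ter w))

theorem mk_mem_labelPairs {h h' : Fin w.length} :
    s(h, h') ∈ labelPairs w ↔ h ≠ h' ∧ (w.get h).1 = (w.get h').1 := by
  simp only [labelPairs, Finset.mem_biUnion, Finset.mem_univ, true_and, Finset.mem_image,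
    Finset.mem_offDiag, Finset.mem_filter, Prod.exists, Function.uncurry_apply_pair]
  constructor
  · rintro ⟨j, a, b, ⟨ha, hb, hab⟩, e⟩
    rcases Sym2.eq_iff.1 e with ⟨rfl, rfl⟩ | ⟨rfl, rfl⟩
    · exact ⟨hab, ha.trans hb.symm⟩
    · exact ⟨hab.symm, hb.trans ha.symm⟩
  · rintro ⟨hne, hlab⟩
    exact ⟨_, h, h', ⟨rfl, hlab.symm, hne⟩, rfl⟩

theorem card_labelPairs :
    (labelPairs w).card = ∑ j, (labelCount w j).choose 2 := by
  rw [labelPairs, Finset.card_biUnion]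
  · exact Finset.sum_congr rfl fun j _ => Sym2.card_image_offDiag _
  · intro j _ j' _ hjj'
    refine Finset.disjoint_left.2 fun e he he' => hjj' ?_
    simp only [Finset.mem_image, Finset.mem_offDiag, Finset.mem_filter, Finset.mem_univ, true_and,
      Prod.exists, Function.uncurry_apply_pair] at he he'
    obtain ⟨a, b, ⟨ha, -, -⟩, rfl⟩ := he
    obtain ⟨c, d, ⟨hc, hd, -⟩, e⟩ := he'
    rcases Sym2.eq_iff.1 e with ⟨rfl, -⟩ | ⟨-, rfl⟩
    · exact ha.symm.trans hc
    · exact ha.symm.trans hd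


theorem eq_of_org_eq_of_label_eq (hcyc : CyclicallyReduced w) {h h' : Fin w.length}
    (hlab : (w.get h).1 = (w.get h').1) (he : org w h = org w h') : h = h' := by
  unfold org at he
  cases hb : (w.get h).2 <;> cases hb' : (w.get h').2 <;>
    simp only [hb, hb', Bool.false_eq_true, if_false, if_true] at he
  · exact nxt_injective he
  · refine (hcyc.get_nxt_ne h ?_).elim
    rw [he]
    exact Prod.ext hlab.symm (by rw [hb']; exact congrArg (!·) hb.symm)
  · refine (hcyc.get_nxt_ne h' ?_).elim
    rw [← he]
    exact Prod.ext hlab (by rw [hb]; exact congrArg (!·) hb'.symm)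
  · exact he

theorem eq_of_ter_eq_of_label_eq (hcyc : CyclicallyReduced w) {h h' : Fin w.length}
    (hlab : (w.get h).1 = (w.get h').1) (he : ter w h = ter w h') : h = h' := by
  have hs' := step_org_ter h'
  rw [← hlab, ← he] at hs'
  exact eq_of_org_eq_of_label_eq hcyc hlab ((step_org_ter h).left_unique hcyc hs')

theorem mk_org_ter (h : Fin w.length) : s(org w h, ter w h) = s(h, nxt h) := by
  unfold org ter
  split
  · rfl
  · exact Sym2.eq_swap

theorem org_ne_ter (hm : 2 ≤ w.length) (h : Fin w.length) : org w h ≠ ter w h := by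
  unfold org ter
  split
  · exact (nxt_ne_self hm h).symm
  · exact nxt_ne_self hm h

theorem eq_of_mk_org_ter_eq (hm : 3 ≤ w.length) {h g : Fin w.length}
    (he : s(org w h, ter w h) = s(org w g, ter w g)) : h = g := by
  rw [mk_org_ter, mk_org_ter] at he
  rcases Sym2.eq_iff.1 he with ⟨rfl, -⟩ | ⟨rfl, he⟩
  · rfl
  · exact (nxt_nxt_ne_self hm g he).elim

variable (hcyc : CyclicallyReduced w) (hprim : w.IsPrimitive)
include hcyc hprim

theorem mk_org_ne_mk_ter {h h' : Fin w.length} (hne : h ≠ h')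
    (hlab : (w.get h).1 = (w.get h').1) : s(org w h, org w h') ≠ s(ter w h, ter w h') := by
  have hm : 2 ≤ w.length := by
    have := Fin.val_ne_of_ne hne; have := h.isLt; have := h'.isLt; omega
  intro he
  rcases Sym2.eq_iff.1 he with ⟨he, -⟩ | ⟨e₁, e₂⟩
  · exact org_ne_ter hm h he
  · have hs' := step_org_ter h'
    rw [← hlab, e₂, ← e₁] at hs'
    exact org_ne_ter hm h (eq_of_step_of_step hcyc hprim (step_org_ter h) hs')

theorem three_le_length_of_label_eq {h h' : Fin w.length} (hne : h ≠ h')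
    (hlab : (w.get h).1 = (w.get h').1) : 3 ≤ w.length := by
  by_contra! hm
  apply mk_org_ne_mk_ter hcyc hprim hne hlab
  have ho := mt (eq_of_org_eq_of_label_eq hcyc hlab) hne
  have ht := mt (eq_of_ter_eq_of_label_eq hcyc hlab) hne
  have := (org w h).isLt; have := (org w h').isLt; have := (ter w h).isLt; have := (ter w h').isLt
  rw [Sym2.eq_iff]
  simp only [Fin.ext_iff] at ho ht ⊢
  omega

theorem mk_eq_mk_of_org_eq_org (hm : 3 ≤ w.length) {h h' g g' : Fin w.length} (hne : h ≠ h')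
    (hlab : (w.get h).1 = (w.get h').1) (hlab' : (w.get g).1 = (w.get g').1)
    (ho : org w h = org w g) (ho' : org w h' = org w g')
    (ht : s(ter w h, ter w h') = s(ter w g, ter w g')) : s(h, h') = s(g, g') := by
  rcases Sym2.eq_iff.1 ht with ⟨ht, ht'⟩ | ⟨ht, ht'⟩
  · have hg : h = g := eq_of_mk_org_ter_eq hm (by rw [ho, ht])
    have hg' : h' = g' := eq_of_mk_org_ter_eq hm (by rw [ho', ht'])
    rw [hg, hg']
  · -- the edges `h, g', h', g` close up a square
    have h₂ := (step_org_ter g').symm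
    rw [← hlab', ← ht, ← ho'] at h₂
    have h₃ := step_org_ter h'
    rw [← hlab] at h₃
    have h₄ := (step_org_ter g).symm
    rw [← ht', ← ho] at h₄
    exact (hne (eq_of_org_eq_of_label_eq hcyc hlab
      (eq_of_step_square hcyc hprim (step_org_ter h) h₂ h₃ h₄))).elim

theorem mk_ter_ne_mk_org_of_org_eq_ter (hm : 3 ≤ w.length) {h h' g g' : Fin w.length}
    (hne : h ≠ h') (hlab : (w.get h).1 = (w.get h').1) (hlab' : (w.get g).1 = (w.get g').1)
    (ho : org w h = ter w g) (ho' : org w h' = ter w g') :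
    s(ter w h, ter w h') ≠ s(org w g, org w g') := by
  intro ht
  rcases Sym2.eq_iff.1 ht with ⟨ht, -⟩ | ⟨ht, ht'⟩
  · have hg : h = g := eq_of_mk_org_ter_eq hm (by rw [ho, ht, Sym2.eq_swap])
    exact org_ne_ter (by omega) h (hg ▸ ho)
  · -- the edges `h, g', h', g` close up a square
    have h₂ := step_org_ter g'
    rw [← hlab', ← ht, ← ho'] at h₂
    have h₃ := step_org_ter h'
    rw [← hlab] at h₃
    have h₄ := step_org_ter g
    rw [← ht', ← ho] at h₄
    exact hne (eq_of_org_eq_of_label_eq hcyc hlab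
      (eq_of_step_square hcyc hprim (step_org_ter h) h₂ h₃ h₄))

theorem upsilonEdge_injOn : Set.InjOn (upsilonEdge w) (labelPairs w) := by
  intro e he e' he' heq
  induction e using Sym2.ind with | _ h h' =>
  induction e' using Sym2.ind with | _ g g' =>
  obtain ⟨hne, hlab⟩ := mk_mem_labelPairs.1 he
  obtain ⟨-, hlab'⟩ := mk_mem_labelPairs.1 he'
  have hm := three_le_length_of_label_eq hcyc hprim hne hlab
  simp only [upsilonEdge, Sym2.map_mk] at heq
  rcases Sym2.eq_iff.1 heq with ⟨ho, ht⟩ | ⟨ho, ht⟩ <;>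
    rcases Sym2.eq_iff.1 ho with ⟨o, o'⟩ | ⟨o, o'⟩
  · exact mk_eq_mk_of_org_eq_org hcyc hprim hm hne hlab hlab' o o' ht
  · exact (mk_eq_mk_of_org_eq_org hcyc hprim hm hne hlab hlab'.symm o o'
      (ht.trans Sym2.eq_swap)).trans Sym2.eq_swap
  · exact absurd ht (mk_ter_ne_mk_org_of_org_eq_ter hcyc hprim hm hne hlab hlab' o o')
  · exact absurd (ht.trans Sym2.eq_swap)
      (mk_ter_ne_mk_org_of_org_eq_ter hcyc hprim hm hne hlab hlab'.symm o o')

theorem image_edgeSet_upsilon :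
    Sym2.map Subtype.val '' (Upsilon w).edgeSet = upsilonEdge w '' labelPairs w := by
  ext E
  constructor
  · rintro ⟨e, he, rfl⟩
    induction e using Sym2.ind with | _ P Q =>
    obtain ⟨-, h, h', hne, hlab, hPQ⟩ := he
    refine ⟨s(h, h'), mk_mem_labelPairs.2 ⟨hne, hlab⟩, ?_⟩
    change s(s(org w h, org w h'), s(ter w h, ter w h')) = s(P.1, Q.1)
    rcases hPQ with ⟨hP, hQ⟩ | ⟨hQ, hP⟩
    · rw [hP, hQ]
    · rw [hP, hQ, Sym2.eq_swap]
  · rintro ⟨e, he, rfl⟩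
    induction e using Sym2.ind with | _ h h' =>
    obtain ⟨hne, hlab⟩ := mk_mem_labelPairs.1 he
    refine ⟨s(⟨s(org w h, org w h'), ?_⟩, ⟨s(ter w h, ter w h'), ?_⟩),
      ⟨fun hPQ => ?_, h, h', hne, hlab, .inl ⟨rfl, rfl⟩⟩, rfl⟩
    · exact Sym2.mk_isDiag_iff.not.2 (mt (eq_of_org_eq_of_label_eq hcyc hlab) hne)
    · exact Sym2.mk_isDiag_iff.not.2 (mt (eq_of_ter_eq_of_label_eq hcyc hlab) hne)
    · exact mk_org_ne_mk_ter hcyc hprim hne hlab (congrArg Subtype.val hPQ)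

theorem card_edgeSet_upsilon :
    Nat.card (Upsilon w).edgeSet = ∑ j, (labelCount w j).choose 2 := by
  rw [← card_labelPairs, ← Set.ncard_coe_finset, ← (upsilonEdge_injOn hcyc hprim).ncard_image,
    ← image_edgeSet_upsilon hcyc hprim,
    Set.ncard_image_of_injective _ (Sym2.map.injective Subtype.val_injective), Nat.card_coe_set_eq]

end EdgeCount

theorem stmt10_general {k : ℕ} (w : List (Letter k))
    (hcyc : CyclicallyReduced w)
    (hnp : ¬ ∃ (g : FreeGroup (Fin k)) (d : ℕ), 2 ≤ d ∧ toFree w = g ^ d) :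
    (Upsilon w).IsAcyclic ∧
    Nat.card (Upsilon w).ConnectedComponent
      = w.length.choose 2 - ∑ j : Fin k, (labelCount w j).choose 2 := by
  have hprim := isPrimitive_of_not_exists_toFree_eq_pow hnp
  have hacyc := upsilon_isAcyclic hcyc hprim
  refine ⟨hacyc, ?_⟩
  have hforest := hacyc.card_connectedComponent_add_card_edgeSet
  rw [card_edgeSet_upsilon hcyc hprim, Nat.card_eq_fintype_card (α := {p : Sym2 _ // ¬ p.IsDiag}),
    Sym2.card_subtype_not_diag, Fintype.card_fin] at hforest
  omega

/-- For `w` cyclically reduced, nontrivial and not a proper power, the pair-graph `Υ`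
contains no cycles; hence its number of connected components equals
`C(m,2) − ∑_j C(e^j,2)`, where `m = |w|` and `e^j` is the number of `j`-labeled edges. -/
theorem stmt10 {k : ℕ} (w : List (Letter k)) (hw : w ≠ [])
    (hcyc : CyclicallyReduced w)
    (hnp : ¬ ∃ (g : FreeGroup (Fin k)) (d : ℕ), 2 ≤ d ∧ toFree w = g ^ d) :
    (Upsilon w).IsAcyclic ∧
    Nat.card (Upsilon w).ConnectedComponent
      = w.length.choose 2 - ∑ j : Fin k, (labelCount w j).choose 2 :=
  stmt10_general w hcyc hnp
end

section
/- For w a cyclically reduced word that is not a proper power, with Γ̃_w its cycle graph and Υ its pair-graph: for every connected component C of Υ, all pairs {v_i, v_j} belonging to C generate the same realizable quotient graph of Γ̃_w; hence the map f from components of Υ to type-A realizable quotient graphs of characteristic 2 is well defined and surjective. -/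
/-- A quotient (partition) of the vertices of the cycle `Γ̃_w` is realizable if no two
equally-labeled edges share an origin or a terminus in the quotient. -/
def FoldedC {k : ℕ} (w : List (Letter k)) (S : Setoid (Fin w.length)) : Prop :=
  ∀ h h' : Fin w.length, (w.get h).1 = (w.get h').1 →
    (S.r (org w h) (org w h') ↔ S.r (ter w h) (ter w h'))

/-- The realizable quotient of `Γ̃_w` generated by merging the pair `{v_i, v_j}`:
the finest realizable partition identifying `v_i` and `v_j`. -/
def genC {k : ℕ} (w : List (Letter k)) (i j : Fin w.length) : Setoid (Fin w.length) :=
  sInf {S | FoldedC w S ∧ S.r i j}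

/-! Both halves are formal consequences of the definition of `genC` as an infimum. A realizable
partition identifies the origins of two equally labeled edges iff it identifies their termini,
so the two endpoints of an edge of `Υ` lie in exactly the same realizable partitions and hence
generate the same one; along a path of `Υ` the generated quotient is therefore constant. -/

section PairGeneration

variable {k : ℕ} (w : List (Letter k))

lemma genC_eq_of_forall_foldedC_iff {i j i' j' : Fin w.length}
    (h : ∀ S, FoldedC w S → (S.r i j ↔ S.r i' j')) : genC w i j = genC w i' j' := by
  unfold genC
  congr 1
  ext S
  exact and_congr_right (h S)

lemma genC_comm (i j : Fin w.length) : genC w i j = genC w j i :=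
  genC_eq_of_forall_foldedC_iff w fun S _ => ⟨S.symm', S.symm'⟩

lemma genC_org_eq_genC_ter {h h' : Fin w.length} (hl : (w.get h).1 = (w.get h').1) :
    genC w (org w h) (org w h') = genC w (ter w h) (ter w h') :=
  genC_eq_of_forall_foldedC_iff w fun _ hS => hS h h' hl

def pairGen (p : Sym2 (Fin w.length)) : Setoid (Fin w.length) :=
  Sym2.lift ⟨genC w, genC_comm w⟩ p

@[simp]
lemma pairGen_mk (i j : Fin w.length) : pairGen w s(i, j) = genC w i j := rfl

lemma Upsilon.Adj.pairGen_eq {P Q : {p : Sym2 (Fin w.length) // ¬ p.IsDiag}}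
    (hadj : (Upsilon w).Adj P Q) : pairGen w P.1 = pairGen w Q.1 := by
  obtain ⟨-, h, h', -, hl, ⟨hP, hQ⟩ | ⟨hQ, hP⟩⟩ := hadj <;>
    rw [hP, hQ, pairGen_mk, pairGen_mk, genC_org_eq_genC_ter w hl]

lemma Upsilon.Reachable.pairGen_eq {P Q : {p : Sym2 (Fin w.length) // ¬ p.IsDiag}}
    (hPQ : (Upsilon w).Reachable P Q) : pairGen w P.1 = pairGen w Q.1 := by
  rw [SimpleGraph.reachable_iff_reflTransGen] at hPQ
  induction hPQ with
  | refl => rfl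
  | tail _ hadj ih => exact ih.trans (Upsilon.Adj.pairGen_eq w hadj)

end PairGeneration

theorem stmt12_general {k : ℕ} (w : List (Letter k)) :
    (∀ P Q : {p : Sym2 (Fin w.length) // ¬ p.IsDiag}, (Upsilon w).Reachable P Q →
      ∀ i j i' j' : Fin w.length, P.1 = s(i, j) → Q.1 = s(i', j') →
        genC w i j = genC w i' j') ∧
    (∀ S : Setoid (Fin w.length), (∃ i j, i ≠ j ∧ S = genC w i j) →
      ∃ P : {p : Sym2 (Fin w.length) // ¬ p.IsDiag},
        ∀ i j : Fin w.length, P.1 = s(i, j) → genC w i j = S) := by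
  constructor
  · intro P Q hPQ i j i' j' hP hQ
    simpa only [hP, hQ, pairGen_mk] using Upsilon.Reachable.pairGen_eq w hPQ
  · rintro S ⟨i, j, hij, rfl⟩
    refine ⟨⟨s(i, j), Sym2.mk_isDiag_iff.not.mpr hij⟩, fun i' j' hP => ?_⟩
    simpa only [pairGen_mk] using congrArg (pairGen w) hP.symm

/-- For `w` cyclically reduced and not a proper power: any two pairs lying in the same
connected component of the pair-graph `Υ` generate the same realizable quotient of
`Γ̃_w`; hence the map `f` from components of `Υ` to the type-A realizable quotients of
characteristic `2` (namely the quotients generated from `Γ̃_w` by a single pair) is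
well defined, and it is surjective. -/
theorem stmt12 {k : ℕ} (w : List (Letter k)) (hw : w ≠ [])
    (hcyc : CyclicallyReduced w)
    (hnp : ¬ ∃ (g : FreeGroup (Fin k)) (d : ℕ), 2 ≤ d ∧ toFree w = g ^ d) :
    (∀ P Q : {p : Sym2 (Fin w.length) // ¬ p.IsDiag}, (Upsilon w).Reachable P Q →
      ∀ i j i' j' : Fin w.length, P.1 = s(i, j) → Q.1 = s(i', j') →
        genC w i j = genC w i' j') ∧
    (∀ S : Setoid (Fin w.length), (∃ i j, i ≠ j ∧ S = genC w i j) →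
      ∃ P : {p : Sym2 (Fin w.length) // ¬ p.IsDiag},
        ∀ i j : Fin w.length, P.1 = s(i, j) → genC w i j = S) :=
  stmt12_general w
end

section
/- In the step from level n to level n+1 of the recursive factorization (for n ≥ 1): if a_n is a prefix of b_n, then a_{n+1} appears at least three times in a row cyclically in the expression w^{(n+1)}; if instead b_n is a prefix of a_n, then a_{n+1} appears exactly twice in a row but not three times in a row, cyclically, in w^{(n+1)}. Consequently, the expression w^{(n+1)} (even known only up to cyclic shift) determines which of the two substitution rules was applied, and w^{(n)} can be recovered from w^{(n+1)}. -/
/-- The substitution rule used when `aₙ` is a prefix of `bₙ`: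
`aₙ ↦ aₙ₊₁` (token `true ↦ [true]`) and `bₙ ↦ aₙ₊₁bₙ₊₁` (token `false ↦ [true, false]`). -/
def bindA (e : List Bool) : List Bool :=
  e.flatMap fun t => if t then [true] else [true, false]

/-- The substitution rule used when `bₙ` is a prefix of `aₙ`:
`aₙ ↦ aₙ₊₁bₙ₊₁` (token `true ↦ [true, false]`) and `bₙ ↦ aₙ₊₁` (token `false ↦ [true]`). -/
def bindB (e : List Bool) : List Bool :=
  e.flatMap fun t => if t then [true, false] else [true]

/-- The token `x` is (somewhere) cyclically followed by the token `y` in `e`. -/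
def CycPair (e : List Bool) (x y : Bool) : Prop :=
  ∃ i < e.length, e.getD i false = x ∧ e.getD ((i + 1) % e.length) false = y

/-- The token `true` appears (somewhere) three times in a row cyclically in `e`. -/
def CycTriple (e : List Bool) : Prop :=
  ∃ i < e.length, e.getD i false = true ∧ e.getD ((i + 1) % e.length) false = true ∧
    e.getD ((i + 2) % e.length) false = true

/-! ### Auxiliary lemmas -/

lemma bindA_append (u v : List Bool) : bindA (u ++ v) = bindA u ++ bindA v :=
  List.flatMap_append ..

lemma bindB_append (u v : List Bool) : bindB (u ++ v) = bindB u ++ bindB v :=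
  List.flatMap_append ..

lemma bindA_cons_true (l : List Bool) : bindA (true :: l) = true :: bindA l := by
  simp [bindA]

lemma bindA_cons_false (l : List Bool) : bindA (false :: l) = true :: false :: bindA l := by
  simp [bindA]

lemma bindB_cons_true (l : List Bool) : bindB (true :: l) = true :: false :: bindB l := by
  simp [bindB]

lemma bindB_cons_false (l : List Bool) : bindB (false :: l) = true :: bindB l := by
  simp [bindB]

lemma getD_rotate (l : List Bool) (n i : ℕ) (hi : i < l.length) :
    (l.rotate n).getD i false = l.getD ((i + n) % l.length) false := by
  have h1 : i < (l.rotate n).length := by rwa [List.length_rotate]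
  have h2 : (i + n) % l.length < l.length :=
    Nat.mod_lt _ (Nat.lt_of_le_of_lt (Nat.zero_le i) hi)
  rw [List.getD_eq_getElem _ _ h1, List.getD_eq_getElem _ _ h2, List.getElem_rotate]

lemma cycPair_rotate {l : List Bool} {n : ℕ} {x y : Bool}
    (h : CycPair (l.rotate n) x y) : CycPair l x y := by
  obtain ⟨i, hi, hx, hy⟩ := h
  rw [List.length_rotate] at hi hy
  have hm : 0 < l.length := Nat.lt_of_le_of_lt (Nat.zero_le i) hi
  rw [getD_rotate _ _ _ hi] at hx
  rw [getD_rotate _ _ _ (Nat.mod_lt _ hm)] at hy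
  refine ⟨(i + n) % l.length, Nat.mod_lt _ hm, hx, ?_⟩
  have hidx : ((i + n) % l.length + 1) % l.length = ((i + 1) % l.length + n) % l.length := by
    rw [Nat.mod_add_mod, Nat.mod_add_mod]
    congr 1
    omega
  rw [hidx]
  exact hy

lemma cycTriple_rotate {l : List Bool} {n : ℕ}
    (h : CycTriple (l.rotate n)) : CycTriple l := by
  obtain ⟨i, hi, hx, hy, hz⟩ := h
  rw [List.length_rotate] at hi hy hz
  have hm : 0 < l.length := Nat.lt_of_le_of_lt (Nat.zero_le i) hi
  rw [getD_rotate _ _ _ hi] at hx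
  rw [getD_rotate _ _ _ (Nat.mod_lt _ hm)] at hy
  rw [getD_rotate _ _ _ (Nat.mod_lt _ hm)] at hz
  refine ⟨(i + n) % l.length, Nat.mod_lt _ hm, hx, ?_, ?_⟩
  · have hidx : ((i + n) % l.length + 1) % l.length = ((i + 1) % l.length + n) % l.length := by
      rw [Nat.mod_add_mod, Nat.mod_add_mod]; congr 1; omega
    rw [hidx]; exact hy
  · have hidx : ((i + n) % l.length + 2) % l.length = ((i + 2) % l.length + n) % l.length := by
      rw [Nat.mod_add_mod, Nat.mod_add_mod]; congr 1; omega
    rw [hidx]; exact hz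

lemma cycPair_cons (x y : Bool) (l : List Bool) : CycPair (x :: y :: l) x y := by
  refine ⟨0, by simp, by simp, ?_⟩
  have h1 : (0 + 1) % (x :: y :: l).length = 1 := Nat.mod_eq_of_lt (by simp)
  rw [h1]
  simp

lemma cycTriple_cons (l : List Bool) : CycTriple (true :: true :: true :: l) := by
  refine ⟨0, by simp, by simp, ?_, ?_⟩
  · have h1 : (0 + 1) % (true :: true :: true :: l).length = 1 := Nat.mod_eq_of_lt (by simp)
    rw [h1]; simp
  · have h2 : (0 + 2) % (true :: true :: true :: l).length = 2 := Nat.mod_eq_of_lt (by simp)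
    rw [h2]; simp

lemma cycPair_rot_out {e : List Bool} {x y : Bool} (h2 : 2 ≤ e.length)
    (h : CycPair e x y) : ∃ (n : ℕ) (l : List Bool), e.rotate n = x :: y :: l := by
  obtain ⟨i, hi, hx, hy⟩ := h
  have hm : 0 < e.length := by omega
  have hne : e.rotate i ≠ [] := by
    intro hnil
    have := List.length_rotate e i
    rw [hnil] at this
    simp at this
    omega
  obtain ⟨a, r1, h1⟩ := List.exists_cons_of_ne_nil hne
  have hne1 : r1 ≠ [] := by
    intro hnil
    have := List.length_rotate e i
    rw [h1, hnil] at this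
    simp at this
    omega
  obtain ⟨b, r2, hb⟩ := List.exists_cons_of_ne_nil hne1
  refine ⟨i, r2, ?_⟩
  rw [h1, hb]
  have e0 := getD_rotate e i 0 (by omega)
  have e1 := getD_rotate e i 1 (by omega)
  rw [h1, hb] at e0 e1
  simp only [List.getD_cons_zero, List.getD_cons_succ] at e0 e1
  have hi0 : (0 + i) % e.length = i := by rw [Nat.zero_add]; exact Nat.mod_eq_of_lt hi
  have hi1 : (1 + i) % e.length = (i + 1) % e.length := by congr 1; omega
  rw [hi0, hx] at e0
  rw [hi1, hy] at e1
  rw [e0, e1]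

lemma cycTriple_rot_out {e : List Bool} (h3 : 3 ≤ e.length)
    (h : CycTriple e) : ∃ (n : ℕ) (l : List Bool), e.rotate n = true :: true :: true :: l := by
  obtain ⟨i, hi, hx, hy, hz⟩ := h
  have hm : 0 < e.length := by omega
  have hlr := List.length_rotate e i
  have hne : e.rotate i ≠ [] := by intro hnil; rw [hnil] at hlr; simp at hlr; omega
  obtain ⟨a, r1, h1⟩ := List.exists_cons_of_ne_nil hne
  have hne1 : r1 ≠ [] := by intro hnil; rw [h1, hnil] at hlr; simp at hlr; omega
  obtain ⟨b, r2, hb⟩ := List.exists_cons_of_ne_nil hne1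
  have hne2 : r2 ≠ [] := by intro hnil; rw [h1, hb, hnil] at hlr; simp at hlr; omega
  obtain ⟨c, r3, hc⟩ := List.exists_cons_of_ne_nil hne2
  refine ⟨i, r3, ?_⟩
  rw [h1, hb, hc]
  have e0 := getD_rotate e i 0 (by omega)
  have e1 := getD_rotate e i 1 (by omega)
  have e2 := getD_rotate e i 2 (by omega)
  rw [h1, hb, hc] at e0 e1 e2
  simp only [List.getD_cons_zero, List.getD_cons_succ] at e0 e1 e2
  have hi0 : (0 + i) % e.length = i := by rw [Nat.zero_add]; exact Nat.mod_eq_of_lt hi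
  have hi1 : (1 + i) % e.length = (i + 1) % e.length := by congr 1; omega
  have hi2 : (2 + i) % e.length = (i + 2) % e.length := by congr 1; omega
  rw [hi0, hx] at e0
  rw [hi1, hy] at e1
  rw [hi2, hz] at e2
  rw [e0, e1, e2]

lemma rotate_append' (u v : List Bool) : (u ++ v).rotate u.length = v ++ u := by
  rw [List.rotate_eq_drop_append_take (by simp)]
  simp

lemma exists_split (e : List Bool) (n : ℕ) :
    ∃ u v, e = u ++ v ∧ e.rotate n = v ++ u :=
  ⟨e.take (n % e.length), e.drop (n % e.length), (e.take_append_drop _).symm,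
    List.rotate_eq_drop_append_take_mod⟩

lemma true_mem_of_cycPair {e : List Bool} (h : CycPair e true true) : true ∈ e := by
  obtain ⟨i, hi, hx, -⟩ := h
  rw [List.getD_eq_getElem _ _ hi] at hx
  exact hx ▸ List.getElem_mem hi

lemma two_le_length {e : List Bool} (ht : true ∈ e) (hf : false ∈ e) : 2 ≤ e.length := by
  rcases e with - | ⟨a, - | ⟨b, l⟩⟩
  · simp at hf
  · simp at ht hf
    rw [ht] at hf
    exact absurd hf (by simp)
  · simp

lemma le_length_bindB : ∀ e : List Bool, e.length ≤ (bindB e).length := by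
  intro e
  induction e with
  | nil => simp [bindB]
  | cons b l ih =>
    cases b
    · rw [bindB_cons_false]; simpa using ih
    · rw [bindB_cons_true]; simp; omega

lemma three_le_length_bindB {e : List Bool} (ht : true ∈ e) (h2 : 2 ≤ e.length) :
    3 ≤ (bindB e).length := by
  obtain ⟨s, t, rfl⟩ := List.append_of_mem ht
  rw [bindB_append, bindB_cons_true]
  have hs := le_length_bindB s
  have ht' := le_length_bindB t
  simp only [List.length_append, List.length_cons] at h2 ⊢
  omega

lemma bindB_tt {e r : List Bool} (h : bindB e = true :: true :: r) :
    ∃ e', e = false :: e' ∧ bindB e' = true :: r := by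
  cases e with
  | nil => simp [bindB] at h
  | cons b l =>
    cases b
    · refine ⟨l, rfl, ?_⟩
      rw [bindB_cons_false] at h
      simpa using h
    · rw [bindB_cons_true] at h
      simp at h

lemma bindA_ne_false_cons (l r : List Bool) : bindA l ≠ false :: r := by
  cases l with
  | nil => simp [bindA]
  | cons b t => cases b <;> simp [bindA]

lemma bindB_ne_false_cons (l r : List Bool) : bindB l ≠ false :: r := by
  cases l with
  | nil => simp [bindB]
  | cons b t => cases b <;> simp [bindB]

lemma bindA_inj : ∀ e₁ e₂ : List Bool, bindA e₁ = bindA e₂ → e₁ = e₂ := by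
  intro e₁
  induction e₁ with
  | nil =>
    intro e₂ h
    cases e₂ with
    | nil => rfl
    | cons c m => exfalso; cases c <;> simp [bindA] at h
  | cons b l ih =>
    intro e₂ h
    cases e₂ with
    | nil => exfalso; cases b <;> simp [bindA] at h
    | cons c m =>
      cases b <;> cases c <;>
        simp only [bindA_cons_true, bindA_cons_false, List.cons.injEq] at h
      · exact congrArg _ (ih m h.2.2)
      · exact absurd h.2.symm (bindA_ne_false_cons m _)
      · exact absurd h.2 (bindA_ne_false_cons l _)
      · exact congrArg _ (ih m h.2)

lemma bindB_inj : ∀ e₁ e₂ : List Bool, bindB e₁ = bindB e₂ → e₁ = e₂ := by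
  intro e₁
  induction e₁ with
  | nil =>
    intro e₂ h
    cases e₂ with
    | nil => rfl
    | cons c m => exfalso; cases c <;> simp [bindB] at h
  | cons b l ih =>
    intro e₂ h
    cases e₂ with
    | nil => exfalso; cases b <;> simp [bindB] at h
    | cons c m =>
      cases b <;> cases c <;>
        simp only [bindB_cons_true, bindB_cons_false, List.cons.injEq] at h
      · exact congrArg _ (ih m h.2)
      · exact absurd h.2 (bindB_ne_false_cons l _)
      · exact absurd h.2.symm (bindB_ne_false_cons m _)
      · exact congrArg _ (ih m h.2.2)

lemma bindB_split : ∀ (e u v : List Bool), bindB e = u ++ v →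
    (∃ e₁ e₂, e = e₁ ++ e₂ ∧ u = bindB e₁ ∧ v = bindB e₂) ∨
    (∃ e₁ e₂, e = e₁ ++ true :: e₂ ∧ u = bindB e₁ ++ [true] ∧ v = false :: bindB e₂) := by
  intro e
  induction e with
  | nil =>
    intro u v h
    left
    have h' : u = [] ∧ v = [] := List.append_eq_nil_iff.mp (by simpa [bindB] using h.symm)
    exact ⟨[], [], by simp, by simp [bindB, h'.1], by simp [bindB, h'.2]⟩
  | cons b l ih =>
    intro u v h
    cases u with
    | nil =>
      left
      exact ⟨[], b :: l, by simp, by simp [bindB], by simpa using h.symm⟩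
    | cons c u' =>
      cases b
      · rw [bindB_cons_false, List.cons_append] at h
        injection h with h1 h2
        rcases ih u' v h2 with ⟨e₁, e₂, he, hu, hv⟩ | ⟨e₁, e₂, he, hu, hv⟩
        · left
          exact ⟨false :: e₁, e₂, by simp [he], by rw [bindB_cons_false, ← h1, hu], hv⟩
        · right
          exact ⟨false :: e₁, e₂, by simp [he],
            by rw [bindB_cons_false, ← h1, hu, List.cons_append], hv⟩
      · rw [bindB_cons_true, List.cons_append] at h
        injection h with h1 h2
        cases u' with
        | nil =>
          right
          refine ⟨[], l, by simp, ?_, ?_⟩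
          · simp [bindB, ← h1]
          · simpa using h2.symm
        | cons d u'' =>
          rw [List.cons_append] at h2
          injection h2 with h3 h4
          rcases ih u'' v h4 with ⟨e₁, e₂, he, hu, hv⟩ | ⟨e₁, e₂, he, hu, hv⟩
          · left
            exact ⟨true :: e₁, e₂, by simp [he],
              by rw [bindB_cons_true, ← h1, ← h3, hu], hv⟩
          · right
            exact ⟨true :: e₁, e₂, by simp [he],
              by rw [bindB_cons_true, ← h1, ← h3, hu]; simp, hv⟩

/-- Part 1: the `aₙ`-prefix rule produces a cyclic triple `a a a`. -/
lemma partA {e : List Bool} (hpair : CycPair e true true) (hf : false ∈ e) :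
    CycTriple (bindA e) := by
  have ht : true ∈ e := true_mem_of_cycPair hpair
  have hlen2 : 2 ≤ e.length := two_le_length ht hf
  obtain ⟨n, l, hrot⟩ := cycPair_rot_out hlen2 hpair
  obtain ⟨u, v, heq, hru⟩ := exists_split e n
  rw [hrot] at hru
  have hfl : false ∈ l := by
    have hmem : false ∈ e.rotate n := List.mem_rotate.mpr hf
    rw [hrot] at hmem
    simpa using hmem
  obtain ⟨c, l', rfl⟩ : ∃ c l', l = c :: l' := by
    cases l with
    | nil => simp at hfl
    | cons c l' => exact ⟨c, l', rfl⟩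
  have h1 : (bindA e).rotate (bindA u).length = bindA v ++ bindA u := by
    rw [heq, bindA_append]
    exact rotate_append' _ _
  have h2 : bindA v ++ bindA u = bindA (true :: true :: c :: l') := by
    rw [← bindA_append, ← hru]
  obtain ⟨r, hr⟩ : ∃ r, bindA (true :: true :: c :: l') = true :: true :: true :: r := by
    cases c
    · exact ⟨false :: bindA l', by rw [bindA_cons_true, bindA_cons_true, bindA_cons_false]⟩
    · exact ⟨bindA l', by rw [bindA_cons_true, bindA_cons_true, bindA_cons_true]⟩
  apply cycTriple_rotate (n := (bindA u).length)
  rw [h1, h2, hr]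
  exact cycTriple_cons _

/-- Part 2a: the `bₙ`-prefix rule produces a cyclic pair `a a`. -/
lemma partB1 {e : List Bool} (hpair : CycPair e true true) (hf : false ∈ e) :
    CycPair (bindB e) true true := by
  have ht : true ∈ e := true_mem_of_cycPair hpair
  obtain ⟨l₁, l₂, rfl⟩ := List.append_of_mem hf
  have htl : true ∈ l₂ ++ l₁ := by
    simp only [List.mem_append, List.mem_cons] at ht ⊢
    rcases ht with h | h
    · exact Or.inr h
    · rcases h with h | h
      · exact absurd h (by simp)
      · exact Or.inl h
  obtain ⟨c, l₃, hc⟩ : ∃ c l₃, l₂ ++ l₁ = c :: l₃ := by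
    cases h : l₂ ++ l₁ with
    | nil => rw [h] at htl; simp at htl
    | cons c l₃ => exact ⟨c, l₃, rfl⟩
  have h1 : (bindB (l₁ ++ false :: l₂)).rotate (bindB l₁).length
      = bindB (false :: l₂) ++ bindB l₁ := by
    rw [bindB_append]
    exact rotate_append' _ _
  have h2 : bindB (false :: l₂) ++ bindB l₁ = true :: bindB (c :: l₃) := by
    rw [bindB_cons_false, List.cons_append, ← bindB_append, hc]
  obtain ⟨r, hr⟩ : ∃ r, bindB (c :: l₃) = true :: r := by
    cases c
    · exact ⟨bindB l₃, bindB_cons_false _⟩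
    · exact ⟨false :: bindB l₃, bindB_cons_true _⟩
  apply cycPair_rotate (n := (bindB l₁).length)
  rw [h1, h2, hr]
  exact cycPair_cons _ _ _

/-- Part 2b: the `bₙ`-prefix rule never produces a cyclic triple `a a a`. -/
lemma partB2 {e : List Bool} (hpair : CycPair e true true)
    (hnoff : ¬ CycPair e false false) (hf : false ∈ e) : ¬ CycTriple (bindB e) := by
  intro htrip
  have ht : true ∈ e := true_mem_of_cycPair hpair
  have hlen2 : 2 ≤ e.length := two_le_length ht hf
  have hlenB : 3 ≤ (bindB e).length := three_le_length_bindB ht hlen2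
  obtain ⟨n, l, hrot⟩ := cycTriple_rot_out hlenB htrip
  obtain ⟨u, v, heqB, hru⟩ := exists_split (bindB e) n
  rw [hrot] at hru
  rcases bindB_split e u v heqB with ⟨e₁, e₂, he, hu, hv⟩ | ⟨e₁, e₂, he, hu, hv⟩
  · have hb : bindB (e₂ ++ e₁) = true :: true :: true :: l := by
      rw [bindB_append, ← hu, ← hv, hru]
    obtain ⟨e₃, he3, hb3⟩ := bindB_tt hb
    obtain ⟨e₄, he4, -⟩ := bindB_tt hb3
    have hffp : CycPair (e₂ ++ e₁) false false := by
      rw [he3, he4]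
      exact cycPair_cons _ _ _
    apply hnoff
    apply cycPair_rotate (n := e₁.length)
    have hre : e.rotate e₁.length = e₂ ++ e₁ := by
      rw [he]
      exact rotate_append' _ _
    rw [hre]
    exact hffp
  · rw [hv, List.cons_append] at hru
    injection hru with hfalse htl
    exact absurd hfalse (by simp)

/-- Let `e` encode the expression `w⁽ⁿ⁾` (`n ≥ 1`), so `aₙ` appears twice in a row
cyclically (`CycPair e true true`), `bₙ` never does (`¬ CycPair e false false`), and
`bₙ` occurs (`false ∈ e`). If the rule "`aₙ` prefix of `bₙ`" is applied, then `aₙ₊₁`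
appears at least three times in a row cyclically in `w⁽ⁿ⁺¹⁾`; if instead the rule
"`bₙ` prefix of `aₙ`" is applied, then `aₙ₊₁` appears twice but never three times in a
row cyclically. Consequently `w⁽ⁿ⁺¹⁾` determines which rule was applied (the two
outcomes never coincide) and `w⁽ⁿ⁾` can be recovered (both substitutions are injective). -/
theorem stmt19 :
    ∀ e : List Bool, CycPair e true true → ¬ CycPair e false false → false ∈ e →
      CycTriple (bindA e) ∧
      (CycPair (bindB e) true true ∧ ¬ CycTriple (bindB e)) ∧
      (∀ e' : List Bool, CycPair e' true true → ¬ CycPair e' false false →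
        false ∈ e' → bindA e ≠ bindB e') ∧
      (∀ e₁ e₂ : List Bool, bindA e₁ = bindA e₂ → e₁ = e₂) ∧
      (∀ e₁ e₂ : List Bool, bindB e₁ = bindB e₂ → e₁ = e₂) := by
  intro e hpair hnoff hf
  refine ⟨partA hpair hf, ⟨partB1 hpair hf, partB2 hpair hnoff hf⟩, ?_, bindA_inj, bindB_inj⟩
  intro e' hp' hn' hf' heq
  exact partB2 hp' hn' hf' (heq ▸ partA hpair hf)
end
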